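/- arXiv:2202.06759 — 3 statements merged into one kernel-verified Lean document; each statement's English description precedes it below -/
import Mathlib

section
/- Let p be an odd prime, n ≥ 1 an integer, α₁, α₂ integers coprime to p, and b an integer coprime to p. Suppose t₁, t₂ are integers such that t_i, α₁ − α₂t_i², and α₁ + α₂t_i² are all coprime to p for i = 1, 2. If b(α₁ − α₂t₁²)·(α₁ + α₂t₁²)^{-1} ≡ b(α₁ − α₂t₂²)·(α₁ + α₂t₂²)^{-1} (mod pⁿ) and 2bα₂t₁·(α₁ + α₂t₁²)^{-1} ≡ 2bα₂t₂·(α₁ + α₂t₂²)^{-1} (mod pⁿ), then t₁ ≡ t₂ (mod pⁿ). Here (·)^{-1} denotes the multiplicative inverse modulo pⁿ. -/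
/-!
Writing `A = α₁ + α₂t²`, the first coordinate is `b(α₁ - α₂t²)A⁻¹ = 2bα₁A⁻¹ - b`, so it determines
`A⁻¹` once `2bα₁` is a unit; the second coordinate `2bα₂t·A⁻¹` then determines `t`.
-/

namespace ZMod

lemma isUnit_two_of_odd {N : ℕ} (hN : Odd N) : IsUnit (2 : ZMod N) := by
  exact_mod_cast (isUnit_iff_coprime 2 N).mpr (Nat.coprime_two_left.mpr hN)

lemma isUnit_intCast_of_not_dvd {p : ℕ} (hp : p.Prime) (n : ℕ) {a : ℤ} (ha : ¬ (p : ℤ) ∣ a) :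
    IsUnit (a : ZMod (p ^ n)) := by
  rw [coe_int_isUnit_iff_isCoprime, Nat.cast_pow]
  exact ((Nat.prime_iff_prime_int.mp hp).coprime_iff_not_dvd.mpr ha).pow_left

variable {N : ℕ} {α₁ α₂ b x₁ x₂ : ZMod N}

lemma inv_eq_inv_of_first_coord_eq (h2 : IsUnit (2 : ZMod N)) (hb : IsUnit b)
    (hα₁ : IsUnit α₁) (hA₁ : IsUnit (α₁ + α₂ * x₁ ^ 2)) (hA₂ : IsUnit (α₁ + α₂ * x₂ ^ 2))
    (heq : b * (α₁ - α₂ * x₁ ^ 2) * (α₁ + α₂ * x₁ ^ 2)⁻¹ =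
      b * (α₁ - α₂ * x₂ ^ 2) * (α₁ + α₂ * x₂ ^ 2)⁻¹) :
    (α₁ + α₂ * x₁ ^ 2)⁻¹ = (α₁ + α₂ * x₂ ^ 2)⁻¹ := by
  refine ((h2.mul hb).mul hα₁).mul_left_cancel ?_
  linear_combination heq + b * mul_inv_of_unit _ hA₁ - b * mul_inv_of_unit _ hA₂

lemma eq_of_second_coord_eq {A : ZMod N} (h2 : IsUnit (2 : ZMod N)) (hb : IsUnit b)
    (hα₂ : IsUnit α₂) (hA : IsUnit A)
    (heq : 2 * b * α₂ * x₁ * A⁻¹ = 2 * b * α₂ * x₂ * A⁻¹) : x₁ = x₂ := by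
  refine ((h2.mul hb).mul hα₂).mul_left_cancel ?_
  linear_combination A * heq - 2 * b * α₂ * (x₁ - x₂) * mul_inv_of_unit _ hA

end ZMod

theorem parametrization_injective_general (p : ℕ) [hp : Fact p.Prime] (hodd : Odd p)
    (n : ℕ) (α₁ α₂ b : ℤ)
    (h1 : ¬ (p : ℤ) ∣ α₁) (h2 : ¬ (p : ℤ) ∣ α₂) (hb : ¬ (p : ℤ) ∣ b)
    (t₁ t₂ : ℤ)
    (ht₁p : ¬ (p : ℤ) ∣ (α₁ + α₂ * t₁ ^ 2))
    (ht₂p : ¬ (p : ℤ) ∣ (α₁ + α₂ * t₂ ^ 2))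
    (heq1 : (b : ZMod (p ^ n)) * ((α₁ : ZMod (p ^ n)) - (α₂ : ZMod (p ^ n)) * (t₁ : ZMod (p ^ n)) ^ 2) *
        ((α₁ : ZMod (p ^ n)) + (α₂ : ZMod (p ^ n)) * (t₁ : ZMod (p ^ n)) ^ 2)⁻¹ =
      (b : ZMod (p ^ n)) * ((α₁ : ZMod (p ^ n)) - (α₂ : ZMod (p ^ n)) * (t₂ : ZMod (p ^ n)) ^ 2) *
        ((α₁ : ZMod (p ^ n)) + (α₂ : ZMod (p ^ n)) * (t₂ : ZMod (p ^ n)) ^ 2)⁻¹)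
    (heq2 : 2 * (b : ZMod (p ^ n)) * (α₂ : ZMod (p ^ n)) * (t₁ : ZMod (p ^ n)) *
        ((α₁ : ZMod (p ^ n)) + (α₂ : ZMod (p ^ n)) * (t₁ : ZMod (p ^ n)) ^ 2)⁻¹ =
      2 * (b : ZMod (p ^ n)) * (α₂ : ZMod (p ^ n)) * (t₂ : ZMod (p ^ n)) *
        ((α₁ : ZMod (p ^ n)) + (α₂ : ZMod (p ^ n)) * (t₂ : ZMod (p ^ n)) ^ 2)⁻¹) :
    (t₁ : ZMod (p ^ n)) = (t₂ : ZMod (p ^ n)) := by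
  have isUnit_cast {a : ℤ} (ha : ¬ (p : ℤ) ∣ a) : IsUnit (a : ZMod (p ^ n)) :=
    ZMod.isUnit_intCast_of_not_dvd hp.out n ha
  have two_isUnit : IsUnit (2 : ZMod (p ^ n)) := ZMod.isUnit_two_of_odd hodd.pow
  have hA₁ : IsUnit ((α₁ : ZMod (p ^ n)) + α₂ * t₁ ^ 2) := by exact_mod_cast isUnit_cast ht₁p
  have hA₂ : IsUnit ((α₁ : ZMod (p ^ n)) + α₂ * t₂ ^ 2) := by exact_mod_cast isUnit_cast ht₂p
  have hinv := ZMod.inv_eq_inv_of_first_coord_eq two_isUnit (isUnit_cast hb) (isUnit_cast h1)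
    hA₁ hA₂ heq1
  rw [← hinv] at heq2
  exact ZMod.eq_of_second_coord_eq two_isUnit (isUnit_cast hb) (isUnit_cast h2) hA₁ heq2

/-- The parametrization
`t ↦ (b(α₁-α₂t²)(α₁+α₂t²)⁻¹, 2bα₂t(α₁+α₂t²)⁻¹)` is injective modulo `pⁿ` on parameters `t`
with `t`, `α₁-α₂t²`, `α₁+α₂t²` coprime to `p`. -/
theorem parametrization_injective (p : ℕ) [hp : Fact p.Prime] (hodd : Odd p)
    (n : ℕ) (hn : 1 ≤ n) (α₁ α₂ b : ℤ)
    (h1 : ¬ (p : ℤ) ∣ α₁) (h2 : ¬ (p : ℤ) ∣ α₂) (hb : ¬ (p : ℤ) ∣ b)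
    (t₁ t₂ : ℤ)
    (ht₁ : ¬ (p : ℤ) ∣ t₁) (ht₁m : ¬ (p : ℤ) ∣ (α₁ - α₂ * t₁ ^ 2))
    (ht₁p : ¬ (p : ℤ) ∣ (α₁ + α₂ * t₁ ^ 2))
    (ht₂ : ¬ (p : ℤ) ∣ t₂) (ht₂m : ¬ (p : ℤ) ∣ (α₁ - α₂ * t₂ ^ 2))
    (ht₂p : ¬ (p : ℤ) ∣ (α₁ + α₂ * t₂ ^ 2))
    (heq1 : (b : ZMod (p ^ n)) * ((α₁ : ZMod (p ^ n)) - (α₂ : ZMod (p ^ n)) * (t₁ : ZMod (p ^ n)) ^ 2) *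
        ((α₁ : ZMod (p ^ n)) + (α₂ : ZMod (p ^ n)) * (t₁ : ZMod (p ^ n)) ^ 2)⁻¹ =
      (b : ZMod (p ^ n)) * ((α₁ : ZMod (p ^ n)) - (α₂ : ZMod (p ^ n)) * (t₂ : ZMod (p ^ n)) ^ 2) *
        ((α₁ : ZMod (p ^ n)) + (α₂ : ZMod (p ^ n)) * (t₂ : ZMod (p ^ n)) ^ 2)⁻¹)
    (heq2 : 2 * (b : ZMod (p ^ n)) * (α₂ : ZMod (p ^ n)) * (t₁ : ZMod (p ^ n)) *
        ((α₁ : ZMod (p ^ n)) + (α₂ : ZMod (p ^ n)) * (t₁ : ZMod (p ^ n)) ^ 2)⁻¹ =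
      2 * (b : ZMod (p ^ n)) * (α₂ : ZMod (p ^ n)) * (t₂ : ZMod (p ^ n)) *
        ((α₁ : ZMod (p ^ n)) + (α₂ : ZMod (p ^ n)) * (t₂ : ZMod (p ^ n)) ^ 2)⁻¹) :
    (t₁ : ZMod (p ^ n)) = (t₂ : ZMod (p ^ n)) :=
  parametrization_injective_general p (hp := hp) hodd n α₁ α₂ b h1 h2 hb t₁ t₂ ht₁p ht₂p heq1 heq2
end

section
/- Let p be an odd prime, n ≥ 1 an integer, and α₁, α₂, α₃ integers coprime to p such that none of −α₁α₂, −α₁α₃, −α₂α₃ is a quadratic residue modulo p. Let a, b ∈ ℤ_p satisfy α₁a² + α₂b² = −α₃. Let T be the set of pairs (s,t) of integers with either s = 0 and 1 ≤ t ≤ pⁿ, or 1 ≤ s ≤ n, 1 ≤ t ≤ p^{n−s} and p ∤ t. For (s,t) ∈ T set D_s(t) := α₁p^{2s} + α₂t² ∈ ℤ_p. Then: (1) for every (s,t) ∈ T, D_s(t) is a unit in ℤ_p, so that Y₁(s,t) := a − 2α₂(at² − btp^s)·D_s(t)^{-1} and Y₂(s,t) := −b − 2α₁p^s(at − bp^s)·D_s(t)^{-1}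 lie in ℤ_p; (2) the map T → (ℤ/pⁿℤ)² sending (s,t) to (Y₁(s,t) mod pⁿ, Y₂(s,t) mod pⁿ) is injective; (3) its image is exactly the set of pairs (y₁,y₂) ∈ (ℤ/pⁿℤ)² with α₁y₁² + α₂y₂² + α₃ = 0 in ℤ/pⁿℤ; and (4) |T| = pⁿ + p^{n−1}. -/
/-!
Put `β = -α₁α₂` and work in `R[√β]` over `R = ℤ/pⁿ`. A point `(y₁, y₂)` lies on the conic
`α₁y₁² + α₂y₂² + α₃ = 0` iff `w = α₁y₁ + y₂√β` has norm `-α₁α₃ = N z`, where `z = α₁a + b√β`.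
The formulas for `Y₁, Y₂` say exactly that `w τ = z τ̄` for `τ = α₁pˢ + t√β`, whose norm
`α₁ D_s(t)` is a unit because `β` is not a square mod `p`; so `w = z τ̄ / τ` is on the conic.

Conversely, if `N w = N z` then `w τ = z τ̄` both for `τ = z·conj(z + w)` and for
`τ = √β·z·conj(z - w)`. The real part of the first and the `√β`-part of the second add up to
`2 N z`, a unit, so one of them is a unit; rescaling `τ` by a scalar and then changing `t` modulo
`p^(n-s)`, which preserves the relation, brings `τ` to the form `α₁pˢ + t√β` with `(s, t) ∈ T`.
If `w τ = z τ̄` and `w τ' = z τ̄'` with `w` a unit, then `τ τ̄' = τ' τ̄`, so `τ` and `τ'` are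
proportional: they are the same point of `ℙ¹(ℤ/pⁿ)`, of which `T` is a set of representatives.
Finally `(s, t) ↦ p^(s-1) t` maps the part of `T` with `s ≥ 1` bijectively onto `[1, p^(n-1)]`.
-/

/-- The denominator `D_s(t) = α₁ p^{2s} + α₂ t²` appearing in the parametrization. -/
noncomputable def paramDenom (p : ℕ) [Fact p.Prime] (α₁ α₂ : ℤ) (s : ℕ) (t : ℤ) : ℤ_[p] :=
  (α₁ : ℤ_[p]) * (p : ℤ_[p]) ^ (2 * s) + (α₂ : ℤ_[p]) * (t : ℤ_[p]) ^ 2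

/-- `Y₁(s,t) = a - 2α₂(at² - btp^s)·D_s(t)⁻¹` in `ℤ_p`. -/
noncomputable def paramY₁ (p : ℕ) [Fact p.Prime] (α₁ α₂ : ℤ) (a b : ℤ_[p])
    (s : ℕ) (t : ℤ) : ℤ_[p] :=
  a - 2 * (α₂ : ℤ_[p]) * (a * (t : ℤ_[p]) ^ 2 - b * (t : ℤ_[p]) * (p : ℤ_[p]) ^ s) *
    Ring.inverse (paramDenom p α₁ α₂ s t)

/-- `Y₂(s,t) = -b - 2α₁p^s(at - bp^s)·D_s(t)⁻¹` in `ℤ_p`. -/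
noncomputable def paramY₂ (p : ℕ) [Fact p.Prime] (α₁ α₂ : ℤ) (a b : ℤ_[p])
    (s : ℕ) (t : ℤ) : ℤ_[p] :=
  -b - 2 * (α₁ : ℤ_[p]) * (p : ℤ_[p]) ^ s * (a * (t : ℤ_[p]) - b * (p : ℤ_[p]) ^ s) *
    Ring.inverse (paramDenom p α₁ α₂ s t)

namespace QuadraticAlgebra

variable {R : Type*} [CommRing R] {a b : R}

theorem norm_eq_of_mul_eq_mul_star {w z τ : QuadraticAlgebra R a b} (h : w * τ = z * star τ)
    (hτ : IsUnit τ.norm) : w.norm = z.norm := by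
  have := congrArg norm h
  rw [map_mul, map_mul, norm_star] at this
  exact hτ.mul_right_cancel this

theorem re_mul_im_eq_of_mul_eq_mul_star {w z τ τ' : QuadraticAlgebra R a b}
    (h : w * τ = z * star τ) (h' : w * τ' = z * star τ') (hw : IsUnit w) (h2 : IsUnit (2 : R)) :
    τ.re * τ'.im = τ.im * τ'.re := by
  have hττ' : τ * star τ' = τ' * star τ :=
    hw.mul_left_cancel (by linear_combination star τ' * h - star τ * h')
  have := congrArg im hττ'
  simp only [im_mul, re_star, im_star] at this
  exact h2.mul_left_cancel (by linear_combination -this)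

theorem mul_smul_eq_mul_star_smul {w z τ : QuadraticAlgebra R a b} (h : w * τ = z * star τ)
    (r : R) : w * (r • τ) = z * star (r • τ) := by
  have hstar : star (r • τ) = r • star τ := by
    ext <;> simp only [re_star, im_star, re_smul, im_smul, smul_eq_mul] <;> ring
  rw [hstar, mul_smul_comm, mul_smul_comm, h]

theorem mul_eq_mul_star_of_re_mul_sub_eq_zero {w z : QuadraticAlgebra R a b} {x y y' : R}
    (h : w * ⟨x, y⟩ = z * star ⟨x, y⟩) (hx : x * (y' - y) = 0) (hy : IsUnit y) :
    w * ⟨x, y'⟩ = z * star ⟨x, y'⟩ := by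
  set d := w * ω - z * star ω
  have hshift : w * ⟨x, y'⟩ - z * star ⟨x, y'⟩ =
      w * ⟨x, y⟩ - z * star ⟨x, y⟩ + (y' - y) • d := by
    ext <;> simp only [d, re_sub, im_sub, re_add, im_add, re_mul, im_mul, re_smul, im_smul,
      re_star, im_star, omega_re, omega_im, smul_eq_mul] <;> ring
  have hd : y • d = w * ⟨x, y⟩ - z * star ⟨x, y⟩ - x • (w - z) := by
    ext <;> simp only [d, re_sub, im_sub, re_mul, im_mul, re_smul, im_smul, re_star, im_star,
      omega_re, omega_im, smul_eq_mul] <;> ring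
  rw [h, sub_self, zero_sub] at hd
  have hεd : (y' - y) • d = 0 := by
    refine (hy.smul_left_cancel).mp ?_
    rw [smul_zero, smul_comm, hd, smul_neg, smul_smul, mul_comm, hx, zero_smul, neg_zero]
  rw [← sub_eq_zero, hshift, h, sub_self, hεd, add_zero]

theorem exists_mul_eq_mul_star [IsLocalRing R] {w z : QuadraticAlgebra R a 0}
    (hN : w.norm = z.norm) (h2N : IsUnit (2 * z.norm)) :
    ∃ τ : QuadraticAlgebra R a 0, w * τ = z * star τ ∧ (IsUnit τ.re ∨ IsUnit τ.im) := by
  have hw := algebraMap_norm_eq_mul_star w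
  rw [hN] at hw
  have hz := algebraMap_norm_eq_mul_star z
  have hωs : star (ω : QuadraticAlgebra R a 0) = -ω := by ext <;> simp
  have hsum : (z * star (z + w)).re + (ω * z * star (z - w)).im = 2 * z.norm := by
    simp only [norm_def, star_add, star_sub, re_add, im_add, re_sub, im_sub, re_mul, im_mul,
      re_star, im_star, omega_re, omega_im]
    ring
  rcases IsLocalRing.isUnit_or_isUnit_of_isUnit_add (hsum ▸ h2N) with hre | him
  · refine ⟨z * star (z + w), ?_, Or.inl hre⟩
    rw [star_mul, star_star, star_add]
    linear_combination z * hz - z * hw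
  · refine ⟨ω * z * star (z - w), ?_, Or.inr him⟩
    rw [star_mul, star_mul, star_star, hωs, star_sub]
    linear_combination ω * z * hw - ω * z * hz

theorem norm_mk_mul_left (c₁ c₂ x y : R) :
    (⟨c₁ * x, y⟩ : QuadraticAlgebra R (-(c₁ * c₂)) 0).norm = c₁ * (c₁ * x ^ 2 + c₂ * y ^ 2) := by
  rw [norm_def]
  ring

end QuadraticAlgebra

open QuadraticAlgebra

theorem Int.exists_mem_Icc_dvd_sub {M : ℤ} (hM : 0 < M) (v : ℤ) :
    ∃ t, 1 ≤ t ∧ t ≤ M ∧ M ∣ t - v := by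
  refine ⟨(v - 1) % M + 1, by linarith [Int.emod_nonneg (v - 1) hM.ne'],
    by linarith [Int.emod_lt_of_pos (v - 1) hM], ⟨-((v - 1) / M), ?_⟩⟩
  rw [Int.emod_def]
  ring

theorem Int.pow_mul_eq_pow_mul_of_not_dvd {p t t' : ℤ} (hp : Prime p) {a b : ℕ}
    (ht : ¬ p ∣ t) (ht' : ¬ p ∣ t') (h : p ^ a * t = p ^ b * t') : a = b ∧ t = t' := by
  wlog hab : a ≤ b generalizing a b t t'
  · have := this ht' ht h.symm (by omega)
    exact ⟨this.1.symm, this.2.symm⟩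
  obtain ⟨c, rfl⟩ := Nat.exists_eq_add_of_le hab
  rw [pow_add, mul_assoc] at h
  have h' := mul_left_cancel₀ (pow_ne_zero a hp.ne_zero) h
  rcases c with _ | c
  · simpa using h'
  · exact absurd (h' ▸ (dvd_pow_self p c.succ_ne_zero).mul_right t') ht

theorem Int.not_dvd_of_pow_dvd_sub {p m : ℕ} (hp : p.Prime) {t v : ℤ} (ht1 : 1 ≤ t)
    (ht : t ≤ p ^ m) (h : (p : ℤ) ^ m ∣ t - v) (hv : ¬ (p : ℤ) ∣ v) : ¬ (p : ℤ) ∣ t := by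
  intro hpt
  rcases Nat.eq_zero_or_pos m with rfl | hm
  · rw [pow_zero] at ht
    rw [show t = 1 by omega] at hpt
    exact hp.one_lt.ne' (by exact_mod_cast Int.eq_one_of_dvd_one (by positivity) hpt)
  · exact hv ((dvd_sub_right hpt).mp ((dvd_pow_self _ hm.ne').trans h))

theorem Nat.exists_eq_pow_mul_and_not_dvd_of_le_pow {p k m : ℕ} (hp : p.Prime) (hk : k ≠ 0)
    (hkm : k ≤ p ^ m) : ∃ e k', e ≤ m ∧ k' ≤ p ^ (m - e) ∧ ¬ p ∣ k' ∧ k = p ^ e * k' := by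
  obtain ⟨e, k', hpk', rfl⟩ := Nat.exists_eq_pow_mul_and_not_dvd hk p hp.ne_one
  have hk' : 0 < k' := Nat.pos_of_ne_zero (by rintro rfl; simp at hk)
  have hem : e ≤ m :=
    (Nat.pow_le_pow_iff_right hp.one_lt).mp ((Nat.le_mul_of_pos_right _ hk').trans hkm)
  refine ⟨e, k', hem, Nat.le_of_mul_le_mul_left ?_ (pow_pos hp.pos e), hpk', rfl⟩
  rwa [← pow_add, Nat.add_sub_cancel' hem]

theorem Int.encard_Icc_one (M : ℕ) : (Set.Icc (1 : ℤ) M).encard = M := by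
  rw [← Finset.coe_Icc, Set.encard_coe_eq_coe_finsetCard, Int.card_Icc, add_sub_cancel_right,
    Int.toNat_natCast]

theorem PadicInt.isUnit_intCast_iff {p : ℕ} [Fact p.Prime] (k : ℤ) :
    IsUnit (k : ℤ_[p]) ↔ ¬ (p : ℤ) ∣ k := by
  rw [PadicInt.isUnit_iff, ← PadicInt.norm_int_lt_one_iff_dvd, not_lt]
  exact ⟨ge_of_eq, (PadicInt.norm_le_one _).antisymm⟩

namespace ZMod

variable {p : ℕ} [hp : Fact p.Prime] {n : ℕ}

instance nontrivial_prime_pow [NeZero n] : Nontrivial (ZMod (p ^ n)) :=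
  nontrivial_iff.mpr (Nat.one_lt_pow (NeZero.ne n) hp.out.one_lt).ne'

instance isLocalRing_prime_pow [NeZero n] : IsLocalRing (ZMod (p ^ n)) :=
  IsLocalRing.of_surjective' (PadicInt.toZModPow n) (ringHom_surjective _)

theorem isUnit_intCast_prime_pow_iff [NeZero n] (k : ℤ) :
    IsUnit (k : ZMod (p ^ n)) ↔ ¬ (p : ℤ) ∣ k := by
  rw [← PadicInt.isUnit_intCast_iff, ← map_intCast (PadicInt.toZModPow n), isUnit_map_iff]

theorem exists_eq_prime_pow_mul (x : ZMod (p ^ n)) :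
    ∃ s ≤ n, ∃ u : ZMod (p ^ n), IsUnit u ∧ x = p ^ s * u := by
  by_cases hx : x.val = 0
  · refine ⟨n, le_rfl, 1, isUnit_one, ?_⟩
    rw [(val_eq_zero x).mp hx, ← Nat.cast_pow, natCast_self, zero_mul]
  obtain ⟨s, m, hsn, -, hpm, hxm⟩ :=
    Nat.exists_eq_pow_mul_and_not_dvd_of_le_pow hp.out hx (val_lt x).le
  have hn : 0 < n := Nat.pos_of_ne_zero fun h => hx (by simpa [h] using val_lt x)
  refine ⟨s, hsn, m, (isUnit_natCast_iff_not_dvd_pow hp.out hn).mpr hpm, ?_⟩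
  rw [← natCast_zmod_val x, hxm, Nat.cast_mul, Nat.cast_pow]

theorem isUnit_two_prime_pow [NeZero n] (hodd : Odd p) : IsUnit (2 : ZMod (p ^ n)) := by
  have hp2 : ¬ p ∣ 2 := fun h => by
    rw [(Nat.prime_dvd_prime_iff_eq hp.out Nat.prime_two).mp h] at hodd
    exact absurd hodd (by decide)
  exact_mod_cast
    (isUnit_natCast_iff_not_dvd_pow hp.out (Nat.pos_of_ne_zero (NeZero.ne n))).mpr hp2

end ZMod

def paramSet (p n : ℕ) : Set (ℕ × ℤ) :=
  {st : ℕ × ℤ |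
    (st.1 = 0 ∧ 1 ≤ st.2 ∧ st.2 ≤ (p : ℤ) ^ n) ∨
    (1 ≤ st.1 ∧ st.1 ≤ n ∧ 1 ≤ st.2 ∧ st.2 ≤ (p : ℤ) ^ (n - st.1) ∧ ¬ (p : ℤ) ∣ st.2)}

namespace paramSet

variable {p n s s' : ℕ} {t t' : ℤ}

theorem mem_iff : (s, t) ∈ paramSet p n ↔
    s ≤ n ∧ 1 ≤ t ∧ t ≤ (p : ℤ) ^ (n - s) ∧ (s ≠ 0 → ¬ (p : ℤ) ∣ t) := by
  rcases Nat.eq_zero_or_pos s with rfl | hs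
  · simp [paramSet]
  · simp [paramSet, hs.ne', Nat.one_le_iff_ne_zero]

theorem eq_of_dvd (hp : p ≠ 0) (hst : (s, t) ∈ paramSet p n) (hst' : (s', t') ∈ paramSet p n)
    (h : (p : ℤ) ^ n ∣ p ^ s * t' - p ^ s' * t) : s = s' ∧ t = t' := by
  wlog hle : s ≤ s' generalizing s s' t t'
  · have := this hst' hst (by simpa using h.neg_right) (by omega)
    exact ⟨this.1.symm, this.2.symm⟩
  rw [mem_iff] at hst hst'
  have hp' : (p : ℤ) ≠ 0 := by exact_mod_cast hp
  have hdvd : (p : ℤ) ^ (n - s) ∣ t' - p ^ (s' - s) * t := by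
    refine (mul_dvd_mul_iff_left (pow_ne_zero s hp')).mp ?_
    rw [← pow_add, Nat.add_sub_cancel' hst.1, mul_sub, ← mul_assoc, ← pow_add,
      Nat.add_sub_cancel' hle]
    exact h
  rcases hle.lt_or_eq with hlt | rfl
  · have hp_dvd : (p : ℤ) ∣ t' - p ^ (s' - s) * t :=
      (dvd_pow_self _ (by omega)).trans hdvd
    have hpt : (p : ℤ) ∣ p ^ (s' - s) * t :=
      dvd_mul_of_dvd_left (dvd_pow_self _ (by omega)) _
    exact absurd ((dvd_sub_left hpt).mp hp_dvd) (hst'.2.2.2 (by omega))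
  · refine ⟨rfl, ?_⟩
    rw [Nat.sub_self, pow_zero, one_mul] at hdvd
    have := Int.eq_zero_of_abs_lt_dvd hdvd (by rw [abs_lt]; constructor <;> linarith)
    linarith

theorem encard_inter_fst_eq_zero :
    (paramSet p n ∩ {st | st.1 = 0}).encard = p ^ n := by
  have : paramSet p n ∩ {st | st.1 = 0} = (fun t : ℤ => ((0 : ℕ), t)) '' Set.Icc 1 (p ^ n) := by
    ext ⟨s, t⟩
    simp only [Set.mem_inter_iff, Set.mem_ofPred_eq, Set.mem_image, Set.mem_Icc, Prod.mk.injEq]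
    constructor
    · rintro ⟨hst, rfl⟩
      exact ⟨t, by simpa [mem_iff] using hst, rfl, rfl⟩
    · rintro ⟨t, ht, rfl, rfl⟩
      exact ⟨by simpa [mem_iff] using ht, rfl⟩
  rw [this, (Prod.mk_right_injective 0).injOn.encard_image]
  exact_mod_cast Int.encard_Icc_one (p ^ n)

theorem encard_sdiff_fst_eq_zero (hp : p.Prime) (hn : n ≠ 0) :
    (paramSet p n \ {st | st.1 = 0}).encard = p ^ (n - 1) := by
  set f : ℕ × ℤ → ℤ := fun st => (p : ℤ) ^ (st.1 - 1) * st.2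
  have hinj : Set.InjOn f (paramSet p n \ {st | st.1 = 0}) := by
    rintro ⟨s, t⟩ ⟨hst, hs⟩ ⟨s', t'⟩ ⟨hst', hs'⟩ h
    rw [mem_iff] at hst hst'
    obtain ⟨hss, rfl⟩ := Int.pow_mul_eq_pow_mul_of_not_dvd (Nat.prime_iff_prime_int.mp hp)
      (hst.2.2.2 hs) (hst'.2.2.2 hs') h
    simp only [Prod.mk.injEq, and_true]
    simp only [Set.mem_ofPred_eq] at hs hs'
    omega
  have himage : f '' (paramSet p n \ {st | st.1 = 0}) = Set.Icc 1 ((p : ℤ) ^ (n - 1)) := by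
    ext k
    simp only [Set.mem_image, Set.mem_sdiff, Set.mem_ofPred_eq, Set.mem_Icc, Prod.exists]
    constructor
    · rintro ⟨s, t, ⟨hst, hs⟩, rfl⟩
      obtain ⟨hsn, ht1, ht, -⟩ := mem_iff.mp hst
      refine ⟨one_le_mul_of_one_le_of_one_le (one_le_pow₀ (by exact_mod_cast hp.one_lt.le)) ht1, ?_⟩
      calc (p : ℤ) ^ (s - 1) * t ≤ p ^ (s - 1) * p ^ (n - s) := by gcongr
        _ = p ^ (n - 1) := by rw [← pow_add]; congr 1; omega
    · rintro ⟨hk1, hk⟩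
      lift k to ℕ using by omega
      obtain ⟨e, m, hen, hm, hpm, rfl⟩ :=
        Nat.exists_eq_pow_mul_and_not_dvd_of_le_pow (k := k) (m := n - 1) hp (by omega)
          (by exact_mod_cast hk)
      have hm0 : m ≠ 0 := by rintro rfl; simp at hk1
      refine ⟨e + 1, m, ⟨mem_iff.mpr ⟨by omega, by omega, ?_, fun _ => ?_⟩, by simp⟩, by simp [f]⟩
      · rw [show n - (e + 1) = n - 1 - e by omega]
        exact_mod_cast hm
      · exact_mod_cast hpm
  rw [← hinj.encard_image, himage]
  exact_mod_cast Int.encard_Icc_one (p ^ (n - 1))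

theorem encard_eq (hp : p.Prime) (hn : n ≠ 0) :
    (paramSet p n).encard = p ^ n + p ^ (n - 1) := by
  rw [← Set.encard_sdiff_add_encard_inter _ {st | st.1 = 0}, encard_inter_fst_eq_zero,
    encard_sdiff_fst_eq_zero hp hn, add_comm]

end paramSet

theorem exists_mem_paramSet_mul_eq_mul_star {p : ℕ} [hp : Fact p.Prime] {n : ℕ} [NeZero n]
    {A B c : ZMod (p ^ n)} (hc : IsUnit c) {w z : QuadraticAlgebra (ZMod (p ^ n)) A B}
    {x y : ZMod (p ^ n)}
    (h : w * ⟨x, y⟩ = z * star ⟨x, y⟩) (hxy : IsUnit x ∨ IsUnit y) :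
    ∃ st ∈ paramSet p n, w * ⟨c * p ^ st.1, st.2⟩ = z * star ⟨c * p ^ st.1, st.2⟩ := by
  obtain ⟨s, hsn, u, hu, rfl⟩ := ZMod.exists_eq_prime_pow_mul x
  set r := c * ↑hu.unit⁻¹
  have hscaled := mul_smul_eq_mul_star_smul h r
  rw [smul_mk, smul_eq_mul, smul_eq_mul,
    show r * (p ^ s * u) = c * p ^ s by linear_combination (c * p ^ s) * hu.val_inv_mul] at hscaled
  have hpow : (0 : ℤ) < p ^ (n - s) := pow_pos (by exact_mod_cast hp.out.pos) _
  obtain ⟨t, ht1, htM, hdvd⟩ := Int.exists_mem_Icc_dvd_sub hpow ((r * y).val : ℤ)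
  obtain ⟨k, hk⟩ := hdvd
  have hcast : (t : ZMod (p ^ n)) - r * y = p ^ (n - s) * k := by
    simpa [ZMod.natCast_zmod_val] using congrArg (Int.cast : ℤ → ZMod (p ^ n)) hk
  rcases Nat.eq_zero_or_pos s with rfl | hs
  · refine ⟨(0, t), paramSet.mem_iff.mpr ⟨by omega, ht1, htM, by simp⟩, ?_⟩
    rw [show (t : ZMod (p ^ n)) = r * y by
      rw [← sub_eq_zero, hcast, Nat.sub_zero, ← Nat.cast_pow, ZMod.natCast_self, zero_mul]]
    exact hscaled
  · have hy : IsUnit y := hxy.resolve_left fun hx =>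
      ZMod.prime_natCast_not_isUnit_pow hp.out (Nat.pos_of_ne_zero (NeZero.ne n))
        ((isUnit_pow_iff hs.ne').mp (isUnit_of_mul_isUnit_left hx))
    have hry : IsUnit (r * y) := (hc.mul hu.unit⁻¹.isUnit).mul hy
    have hpt : ¬ (p : ℤ) ∣ t := Int.not_dvd_of_pow_dvd_sub hp.out ht1 htM ⟨k, hk⟩ (by
      rw [← ZMod.isUnit_intCast_prime_pow_iff (n := n), Int.cast_natCast, ZMod.natCast_zmod_val]
      exact hry)
    refine ⟨(s, t), paramSet.mem_iff.mpr ⟨hsn, ht1, htM, fun _ => hpt⟩, ?_⟩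
    refine mul_eq_mul_star_of_re_mul_sub_eq_zero hscaled ?_ hry
    rw [hcast, ← mul_assoc, mul_assoc c, ← pow_add, Nat.add_sub_cancel' hsn, ← Nat.cast_pow,
      ZMod.natCast_self, mul_zero, zero_mul]

def conic {R : Type*} [CommRing R] (c₁ c₂ c₃ : R) : Set (R × R) :=
  {y | c₁ * y.1 ^ 2 + c₂ * y.2 ^ 2 + c₃ = 0}

theorem mk_mem_conic_iff_norm_eq {R : Type*} [CommRing R] {c₁ c₂ c₃ : R} (hc₁ : IsUnit c₁)
    {z : QuadraticAlgebra R (-(c₁ * c₂)) 0} (hz : z.norm = -(c₁ * c₃)) (y : R × R) :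
    y ∈ conic c₁ c₂ c₃ ↔ (⟨c₁ * y.1, y.2⟩ : QuadraticAlgebra R (-(c₁ * c₂)) 0).norm = z.norm := by
  rw [norm_mk_mul_left, hz, neg_mul_eq_mul_neg, hc₁.mul_right_inj, conic, Set.mem_ofPred_eq,
    eq_neg_iff_add_eq_zero]

section Parametrization

variable {p : ℕ} [hp : Fact p.Prime] {n : ℕ} {c₁ c₂ c₃ : ZMod (p ^ n)}
  {z : QuadraticAlgebra (ZMod (p ^ n)) (-(c₁ * c₂)) 0}
  {Y : ℕ × ℤ → ZMod (p ^ n) × ZMod (p ^ n)}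

local notation "𝕂" => QuadraticAlgebra (ZMod (p ^ n)) (-(c₁ * c₂)) 0

theorem injOn_paramSet (hc₁ : IsUnit c₁) (hc₃ : IsUnit c₃) (h2 : IsUnit (2 : ZMod (p ^ n)))
    (hz : z.norm = -(c₁ * c₃))
    (hY : ∀ st ∈ paramSet p n,
      (⟨c₁ * (Y st).1, (Y st).2⟩ : 𝕂) * ⟨c₁ * p ^ st.1, st.2⟩ = z * star ⟨c₁ * p ^ st.1, st.2⟩)
    (hτ : ∀ st ∈ paramSet p n, IsUnit (⟨c₁ * p ^ st.1, st.2⟩ : 𝕂).norm) :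
    Set.InjOn Y (paramSet p n) := by
  rintro ⟨s, t⟩ hst ⟨s', t'⟩ hst' hYeq
  have hw : IsUnit (⟨c₁ * (Y (s, t)).1, (Y (s, t)).2⟩ : 𝕂) := by
    rw [isUnit_iff_norm_isUnit, norm_eq_of_mul_eq_mul_star (hY _ hst) (hτ _ hst), hz]
    exact (hc₁.mul hc₃).neg
  have hcross := re_mul_im_eq_of_mul_eq_mul_star (hY _ hst) (hYeq ▸ hY _ hst') hw h2
  have hdvd : (((p : ℤ) ^ s * t' - p ^ s' * t : ℤ) : ZMod (p ^ n)) = 0 := by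
    push_cast
    exact hc₁.mul_left_cancel (by linear_combination hcross)
  rw [ZMod.intCast_zmod_eq_zero_iff_dvd, Nat.cast_pow] at hdvd
  obtain ⟨rfl, rfl⟩ := paramSet.eq_of_dvd hp.out.ne_zero hst hst' hdvd
  rfl

theorem image_paramSet_eq_conic [NeZero n] (hc₁ : IsUnit c₁) (hc₃ : IsUnit c₃)
    (h2 : IsUnit (2 : ZMod (p ^ n)))
    (hz : z.norm = -(c₁ * c₃))
    (hY : ∀ st ∈ paramSet p n,
      (⟨c₁ * (Y st).1, (Y st).2⟩ : 𝕂) * ⟨c₁ * p ^ st.1, st.2⟩ = z * star ⟨c₁ * p ^ st.1, st.2⟩)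
    (hτ : ∀ st ∈ paramSet p n, IsUnit (⟨c₁ * p ^ st.1, st.2⟩ : 𝕂).norm) :
    Y '' paramSet p n = conic c₁ c₂ c₃ := by
  refine Set.SurjOn.image_eq_of_mapsTo (fun y hy => ?_) fun st hst =>
    (mk_mem_conic_iff_norm_eq hc₁ hz _).mpr (norm_eq_of_mul_eq_mul_star (hY st hst) (hτ st hst))
  obtain ⟨⟨x₁, x₂⟩, hrel, hx⟩ := exists_mul_eq_mul_star ((mk_mem_conic_iff_norm_eq hc₁ hz y).mp hy)
    (h2.mul (hz ▸ (hc₁.mul hc₃).neg))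
  obtain ⟨st, hst, hrel'⟩ := exists_mem_paramSet_mul_eq_mul_star hc₁ hrel hx
  have hw := (isUnit_iff_norm_isUnit.mpr (hτ st hst)).mul_right_cancel
    ((hY st hst).trans hrel'.symm)
  exact ⟨st, hst, Prod.ext (hc₁.mul_left_cancel (congrArg re hw)) (congrArg im hw)⟩

end Parametrization

section Padic

variable {p : ℕ} [Fact p.Prime] {α₁ α₂ : ℤ}

theorem paramDenom_eq_intCast (s : ℕ) (t : ℤ) :
    paramDenom p α₁ α₂ s t = ((α₁ * p ^ (2 * s) + α₂ * t ^ 2 : ℤ) : ℤ_[p]) := by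
  simp [paramDenom]

theorem isUnit_paramDenom (h₁ : ¬ (p : ℤ) ∣ α₁) (h₂ : ¬ (p : ℤ) ∣ α₂)
    (hq : legendreSym p (-(α₁ * α₂)) ≠ 1) {s : ℕ} {t : ℤ} (hst : s ≠ 0 → ¬ (p : ℤ) ∣ t) :
    IsUnit (paramDenom p α₁ α₂ s t) := by
  have hpZ : Prime (p : ℤ) := Nat.prime_iff_prime_int.mp Fact.out
  have hα : ((-(α₁ * α₂) : ℤ) : ZMod p) ≠ 0 := by
    rw [ne_eq, ZMod.intCast_zmod_eq_zero_iff_dvd, dvd_neg]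
    exact hpZ.not_dvd_mul h₁ h₂
  have hleg : legendreSym p (-(α₁ * α₂)) = -1 :=
    (legendreSym.eq_one_or_neg_one p hα).resolve_left hq
  rw [paramDenom_eq_intCast, PadicInt.isUnit_intCast_iff]
  intro hD
  have hD' : (p : ℤ) ∣ (α₂ * t) ^ 2 - -(α₁ * α₂) * (p ^ s) ^ 2 := by
    rw [show (α₂ * t) ^ 2 - -(α₁ * α₂) * ((p : ℤ) ^ s) ^ 2 = α₂ * (α₁ * p ^ (2 * s) + α₂ * t ^ 2)
      by ring]
    exact dvd_mul_of_dvd_right hD α₂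
  obtain ⟨hx, hy⟩ := legendreSym.prime_dvd_of_eq_neg_one hleg hD'
  rcases eq_or_ne s 0 with rfl | hs
  · exact hpZ.not_dvd_one (by simpa using hy)
  · exact hpZ.not_dvd_mul h₂ (hst hs) hx

theorem mk_paramY_mul_eq {R : Type*} [CommRing R] (f : ℤ_[p] →+* R) (a b : ℤ_[p]) {s : ℕ} {t : ℤ}
    (hD : IsUnit (paramDenom p α₁ α₂ s t)) :
    (⟨α₁ * f (paramY₁ p α₁ α₂ a b s t), f (paramY₂ p α₁ α₂ a b s t)⟩ :
        QuadraticAlgebra R (-(α₁ * α₂ : R)) 0) * ⟨α₁ * p ^ s, t⟩ =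
      ⟨α₁ * f a, f b⟩ * star ⟨α₁ * p ^ s, t⟩ := by
  have hE := congrArg f (Ring.mul_inverse_cancel _ hD)
  rw [map_mul, map_one] at hE
  simp only [paramY₁, paramY₂]
  set E := f (Ring.inverse (paramDenom p α₁ α₂ s t))
  simp only [paramDenom, map_mul, map_add, map_pow, map_intCast, map_natCast] at hE
  simp only [star_mk, mk_mul_mk, map_sub, map_neg, map_mul, map_pow, map_intCast, map_natCast,
    map_ofNat f 2]
  ext
  · ring
  · linear_combination (-2 * α₁ * (f a * t - f b * p ^ s)) * hE

theorem isUnit_norm_mk_of_isUnit_paramDenom {R : Type*} [CommRing R] (f : ℤ_[p] →+* R)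
    (hα₁ : IsUnit (α₁ : R)) {s : ℕ} {t : ℤ} (hD : IsUnit (paramDenom p α₁ α₂ s t)) :
    IsUnit (⟨α₁ * p ^ s, t⟩ : QuadraticAlgebra R (-(α₁ * α₂ : R)) 0).norm := by
  rw [norm_mk_mul_left]
  convert hα₁.mul (hD.map f) using 2
  simp [paramDenom, pow_mul']

end Padic

theorem parametrization_case_II_general (p : ℕ) [hp : Fact p.Prime] (hodd : Odd p)
    (n : ℕ) (hn : 1 ≤ n) (α₁ α₂ α₃ : ℤ)
    (h1 : ¬ (p : ℤ) ∣ α₁) (h2 : ¬ (p : ℤ) ∣ α₂) (h3 : ¬ (p : ℤ) ∣ α₃)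
    (hq12 : legendreSym p (-(α₁ * α₂)) ≠ 1)
    (a b : ℤ_[p]) (hab : (α₁ : ℤ_[p]) * a ^ 2 + (α₂ : ℤ_[p]) * b ^ 2 = -(α₃ : ℤ_[p]))
    (T : Set (ℕ × ℤ))
    (hT : T = {st : ℕ × ℤ |
        (st.1 = 0 ∧ 1 ≤ st.2 ∧ st.2 ≤ (p : ℤ) ^ n) ∨
        (1 ≤ st.1 ∧ st.1 ≤ n ∧ 1 ≤ st.2 ∧ st.2 ≤ (p : ℤ) ^ (n - st.1) ∧ ¬ (p : ℤ) ∣ st.2)}) :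
    (∀ st ∈ T, IsUnit (paramDenom p α₁ α₂ st.1 st.2)) ∧
    Set.InjOn (fun st : ℕ × ℤ =>
        ((PadicInt.toZModPow n (paramY₁ p α₁ α₂ a b st.1 st.2),
          PadicInt.toZModPow n (paramY₂ p α₁ α₂ a b st.1 st.2)) :
          ZMod (p ^ n) × ZMod (p ^ n))) T ∧
    (fun st : ℕ × ℤ =>
        ((PadicInt.toZModPow n (paramY₁ p α₁ α₂ a b st.1 st.2),
          PadicInt.toZModPow n (paramY₂ p α₁ α₂ a b st.1 st.2)) :
          ZMod (p ^ n) × ZMod (p ^ n))) '' T =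
      {y : ZMod (p ^ n) × ZMod (p ^ n) |
        (α₁ : ZMod (p ^ n)) * y.1 ^ 2 + (α₂ : ZMod (p ^ n)) * y.2 ^ 2 +
          (α₃ : ZMod (p ^ n)) = 0} ∧
    Nat.card T = p ^ n + p ^ (n - 1) := by
  subst hT
  have : NeZero n := ⟨by omega⟩
  have hD : ∀ st ∈ paramSet p n, IsUnit (paramDenom p α₁ α₂ st.1 st.2) := fun st hst =>
    isUnit_paramDenom h1 h2 hq12 (paramSet.mem_iff.mp hst).2.2.2
  have hα₁ := (ZMod.isUnit_intCast_prime_pow_iff (p := p) (n := n) α₁).mpr h1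
  have hα₃ := (ZMod.isUnit_intCast_prime_pow_iff (p := p) (n := n) α₃).mpr h3
  have h2u : IsUnit (2 : ZMod (p ^ n)) := ZMod.isUnit_two_prime_pow hodd
  have hz : (⟨α₁ * PadicInt.toZModPow n a, PadicInt.toZModPow n b⟩ :
      QuadraticAlgebra (ZMod (p ^ n)) (-(α₁ * α₂ : ZMod (p ^ n))) 0).norm = -(α₁ * α₃) := by
    have := congrArg (PadicInt.toZModPow n) hab
    simp only [map_add, map_mul, map_pow, map_intCast, map_neg] at this
    rw [norm_mk_mul_left, this, mul_neg]
  have hY := fun st (hst : st ∈ paramSet p n) =>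
    mk_paramY_mul_eq (PadicInt.toZModPow n) a b (hD st hst)
  have hτ := fun st (hst : st ∈ paramSet p n) =>
    isUnit_norm_mk_of_isUnit_paramDenom (PadicInt.toZModPow n) hα₁ (hD st hst)
  refine ⟨hD, injOn_paramSet hα₁ hα₃ h2u hz hY hτ, image_paramSet_eq_conic hα₁ hα₃ h2u hz hY hτ, ?_⟩
  rw [Nat.card_coe_set_eq, Set.ncard_def, ← paramSet, paramSet.encard_eq hp.out (by omega)]
  rfl

/-- In the case where none of `-α₁α₂`, `-α₁α₃`, `-α₂α₃` is a quadratic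
residue mod `p`, the map `(s,t) ↦ (Y₁(s,t) mod pⁿ, Y₂(s,t) mod pⁿ)` is well defined on the
parameter set `T`, injective, its image is exactly the set of solutions of
`α₁y₁² + α₂y₂² + α₃ = 0` in `(ℤ/pⁿℤ)²`, and `|T| = pⁿ + p^{n-1}`. -/
theorem parametrization_case_II (p : ℕ) [hp : Fact p.Prime] (hodd : Odd p)
    (n : ℕ) (hn : 1 ≤ n) (α₁ α₂ α₃ : ℤ)
    (h1 : ¬ (p : ℤ) ∣ α₁) (h2 : ¬ (p : ℤ) ∣ α₂) (h3 : ¬ (p : ℤ) ∣ α₃)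
    (hq12 : legendreSym p (-(α₁ * α₂)) ≠ 1)
    (hq13 : legendreSym p (-(α₁ * α₃)) ≠ 1)
    (hq23 : legendreSym p (-(α₂ * α₃)) ≠ 1)
    (a b : ℤ_[p]) (hab : (α₁ : ℤ_[p]) * a ^ 2 + (α₂ : ℤ_[p]) * b ^ 2 = -(α₃ : ℤ_[p]))
    (T : Set (ℕ × ℤ))
    (hT : T = {st : ℕ × ℤ |
        (st.1 = 0 ∧ 1 ≤ st.2 ∧ st.2 ≤ (p : ℤ) ^ n) ∨
        (1 ≤ st.1 ∧ st.1 ≤ n ∧ 1 ≤ st.2 ∧ st.2 ≤ (p : ℤ) ^ (n - st.1) ∧ ¬ (p : ℤ) ∣ st.2)}) :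
    (∀ st ∈ T, IsUnit (paramDenom p α₁ α₂ st.1 st.2)) ∧
    Set.InjOn (fun st : ℕ × ℤ =>
        ((PadicInt.toZModPow n (paramY₁ p α₁ α₂ a b st.1 st.2),
          PadicInt.toZModPow n (paramY₂ p α₁ α₂ a b st.1 st.2)) :
          ZMod (p ^ n) × ZMod (p ^ n))) T ∧
    (fun st : ℕ × ℤ =>
        ((PadicInt.toZModPow n (paramY₁ p α₁ α₂ a b st.1 st.2),
          PadicInt.toZModPow n (paramY₂ p α₁ α₂ a b st.1 st.2)) :
          ZMod (p ^ n) × ZMod (p ^ n))) '' T =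
      {y : ZMod (p ^ n) × ZMod (p ^ n) |
        (α₁ : ZMod (p ^ n)) * y.1 ^ 2 + (α₂ : ZMod (p ^ n)) * y.2 ^ 2 +
          (α₃ : ZMod (p ^ n)) = 0} ∧
    Nat.card T = p ^ n + p ^ (n - 1) :=
  parametrization_case_II_general p (hp := hp) hodd n hn α₁ α₂ α₃ h1 h2 h3 hq12 a b hab T hT
end

section
/- For every ε > 0 there exists a constant C(ε) > 0 with the following property: for every odd prime p, every integer n ≥ 1 with q := pⁿ, all integers β₁, β₂, β₃ coprime to p, and every real M with 1 ≤ M ≤ q^{1/2−ε}, one has Σ_{β₁,β₂,β₃}(M,q) ≤ C(ε) · M^{3/2+ε}. -/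
/-- `Σ_{β₁,β₂,β₃}(M,q)`: the number of triples `(x₁,x₂,x₃) ∈ ℤ³` with
`|x₁|,|x₂|,|x₃| ≤ M`, `p ∤ x₁x₂x₃` and `β₁x₁² + β₂x₂² + β₃x₃² ≡ 0 (mod q)`. -/
noncomputable def sigmaCount (p : ℕ) (β₁ β₂ β₃ : ℤ) (M : ℝ) (q : ℕ) : ℕ :=
  Nat.card {x : ℤ × ℤ × ℤ |
    ((|x.1| : ℤ) : ℝ) ≤ M ∧ ((|x.2.1| : ℤ) : ℝ) ≤ M ∧ ((|x.2.2| : ℤ) : ℝ) ≤ M ∧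
    ¬ (p : ℤ) ∣ x.1 * x.2.1 * x.2.2 ∧
    (q : ℤ) ∣ β₁ * x.1 ^ 2 + β₂ * x.2.1 ^ 2 + β₃ * x.2.2 ^ 2}



open Finset


lemma exists_divisor_bound (δ : ℝ) (hδ : 0 < δ) :
    ∃ C : ℝ, 1 ≤ C ∧ ∀ m : ℕ, m ≠ 0 → (m.divisors.card : ℝ) ≤ C * (m : ℝ) ^ δ := by
  set L := Real.log 2 with hLdef
  have hL : 0 < L := Real.log_pos one_lt_two
  set c₀ : ℝ := max 1 (8 / (δ * L) ^ 2) with hc₀def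
  have hc₀ : 1 ≤ c₀ := le_max_left _ _
  have hc₀' : 0 < c₀ := lt_of_lt_of_le one_pos hc₀
  -- key bound at base 2
  have key0 : ∀ a : ℕ, (a + 1 : ℝ) ≤ c₀ * (2 : ℝ) ^ ((a : ℝ) * δ) := by
    intro a
    rcases Nat.eq_zero_or_pos a with ha | ha
    · subst ha; simpa using hc₀
    · have ht : (0:ℝ) ≤ (a:ℝ) * δ * L := by positivity
      have h2 : (2:ℝ) ^ ((a:ℝ) * δ) = Real.exp ((a:ℝ) * δ * L) := by
        rw [Real.rpow_def_of_pos two_pos, hLdef]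
        ring_nf
      have hexp : ((a:ℝ) * δ * L / 2) ^ 2 ≤ Real.exp ((a:ℝ) * δ * L) := by
        have := Real.add_one_le_exp ((a:ℝ) * δ * L / 2)
        have h1 : (0:ℝ) ≤ (a:ℝ) * δ * L / 2 := by positivity
        have hsq : ((a:ℝ) * δ * L / 2) ^ 2 ≤ ((a:ℝ) * δ * L / 2 + 1) ^ 2 := by
          apply pow_le_pow_left₀ h1; linarith
        calc ((a:ℝ) * δ * L / 2) ^ 2 ≤ ((a:ℝ) * δ * L / 2 + 1) ^ 2 := hsq
          _ ≤ (Real.exp ((a:ℝ) * δ * L / 2)) ^ 2 := by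
              apply pow_le_pow_left₀ (by positivity); linarith
          _ = Real.exp ((a:ℝ) * δ * L) := by
              rw [← Real.exp_nat_mul]; norm_num; ring
      have ha1 : (1:ℝ) ≤ (a:ℝ) := by exact_mod_cast ha
      have hsq2 : (a:ℝ) * (δ * L) ^ 2 / 4 ≤ ((a:ℝ) * δ * L / 2) ^ 2 := by
        have : ((a:ℝ) * δ * L / 2) ^ 2 = (a:ℝ)^2 * (δ * L)^2 / 4 := by ring
        rw [this]
        have : (a:ℝ) * (δ*L)^2 ≤ (a:ℝ)^2 * (δ*L)^2 := by nlinarith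
        linarith
      have hc₀2 : 8 / (δ * L) ^ 2 ≤ c₀ := le_max_right _ _
      have hpos : (0:ℝ) < (δ * L) ^ 2 := by positivity
      have : (2:ℝ) * (a:ℝ) ≤ c₀ * (2:ℝ) ^ ((a:ℝ) * δ) := by
        rw [h2]
        calc (2:ℝ) * (a:ℝ) = (8 / (δ*L)^2) * ((a:ℝ) * (δ*L)^2 / 4) := by
              field_simp; ring
          _ ≤ c₀ * ((a:ℝ) * (δ*L)^2 / 4) := by
              apply mul_le_mul_of_nonneg_right hc₀2; positivity
          _ ≤ c₀ * Real.exp ((a:ℝ) * δ * L) := by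
              apply mul_le_mul_of_nonneg_left _ (le_of_lt hc₀')
              exact le_trans hsq2 hexp
      linarith [this, ha1]
  have keyP : ∀ p a : ℕ, 2 ≤ p →
      (a + 1 : ℝ) ≤ (if (p:ℝ) ^ δ < 2 then c₀ else 1) * ((p:ℝ) ^ a) ^ δ := by
    intro p a hp
    have hp0 : (0:ℝ) < (p:ℝ) := by positivity
    have hp2 : (2:ℝ) ≤ (p:ℝ) := by exact_mod_cast hp
    have hcast : ((p:ℝ) ^ a) ^ δ = ((p:ℝ) ^ δ) ^ a := by
      rw [← Real.rpow_natCast (p:ℝ) a, ← Real.rpow_natCast ((p:ℝ)^δ) a,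
        ← Real.rpow_mul hp0.le, ← Real.rpow_mul hp0.le, mul_comm]
    by_cases hsmall : (p:ℝ) ^ δ < 2
    · rw [if_pos hsmall]
      have h1 : (2:ℝ) ^ ((a:ℝ) * δ) ≤ ((p:ℝ) ^ a) ^ δ := by
        have : ((2:ℝ) ^ a) ^ δ ≤ ((p:ℝ) ^ a) ^ δ := by
          apply Real.rpow_le_rpow (by positivity) _ hδ.le
          exact pow_le_pow_left₀ (by norm_num) hp2 a
        calc (2:ℝ) ^ ((a:ℝ) * δ) = ((2:ℝ) ^ a) ^ δ := by
              rw [← Real.rpow_natCast (2:ℝ) a, ← Real.rpow_mul (by norm_num)]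
          _ ≤ ((p:ℝ) ^ a) ^ δ := this
      calc (a + 1 : ℝ) ≤ c₀ * (2:ℝ) ^ ((a:ℝ) * δ) := key0 a
        _ ≤ c₀ * ((p:ℝ) ^ a) ^ δ := by
            apply mul_le_mul_of_nonneg_left h1 hc₀'.le
    · rw [if_neg hsmall, one_mul, hcast]
      push_neg at hsmall
      have h2a : (a + 1 : ℝ) ≤ (2:ℝ) ^ a := by
        exact_mod_cast Nat.lt_two_pow_self (n := a)
      calc (a + 1 : ℝ) ≤ (2:ℝ) ^ a := h2a
        _ ≤ ((p:ℝ) ^ δ) ^ a := pow_le_pow_left₀ (by norm_num) hsmall a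
  -- the bound on the number of small primes
  set B : ℕ := ⌈(2:ℝ) ^ (1/δ)⌉₊ with hBdef
  refine ⟨c₀ ^ (B + 1), one_le_pow₀ hc₀, ?_⟩
  intro m hm
  have hτ : (m.divisors.card : ℝ) =
      ∏ p ∈ m.primeFactors, ((m.factorization p + 1 : ℕ) : ℝ) := by
    rw [Nat.card_divisors hm]
    push_cast
    rfl
  have hprod : (m:ℝ) = ∏ p ∈ m.primeFactors, ((p:ℝ) ^ (m.factorization p)) := by
    conv_lhs => rw [← Nat.factorization_prod_pow_eq_self hm]
    push_cast
    rfl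
  have step1 : (m.divisors.card : ℝ) ≤
      (∏ p ∈ m.primeFactors, (if (p:ℝ) ^ δ < 2 then c₀ else 1)) * (m:ℝ) ^ δ := by
    rw [hτ]
    have : (m:ℝ) ^ δ = ∏ p ∈ m.primeFactors, ((p:ℝ) ^ (m.factorization p)) ^ δ := by
      rw [Real.finset_prod_rpow _ _ (fun i _ => by positivity) δ, ← hprod]
    rw [this, ← Finset.prod_mul_distrib]
    apply Finset.prod_le_prod
    · intro i _; positivity
    · intro i hi
      have hip : 2 ≤ i := (Nat.prime_of_mem_primeFactors hi).two_le
      have := keyP i (m.factorization i) hip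
      push_cast
      exact this
  have step2 : (∏ p ∈ m.primeFactors, (if (p:ℝ) ^ δ < 2 then c₀ else 1)) ≤ c₀ ^ (B + 1) := by
    have hsplit : (∏ p ∈ m.primeFactors, (if (p:ℝ) ^ δ < 2 then c₀ else 1))
        = c₀ ^ (m.primeFactors.filter (fun p : ℕ => (p:ℝ) ^ δ < 2)).card := by
      rw [Finset.prod_ite, Finset.prod_const, Finset.prod_const, one_pow, mul_one]
    rw [hsplit]
    have hcard : (m.primeFactors.filter (fun p : ℕ => (p:ℝ) ^ δ < 2)).card ≤ B + 1 := by
      have hsub : (m.primeFactors.filter (fun p : ℕ => (p:ℝ) ^ δ < 2)) ⊆ Finset.range (B + 1) := by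
        intro p hp
        rw [Finset.mem_filter] at hp
        rw [Finset.mem_range]
        have hp0 : (0:ℝ) ≤ (p:ℝ) := by positivity
        have h1 : (p:ℝ) < (2:ℝ) ^ (1/δ) := by
          have := Real.rpow_lt_rpow (by positivity) hp.2 (by positivity : (0:ℝ) < 1/δ)
          rwa [← Real.rpow_mul hp0, mul_one_div, div_self hδ.ne', Real.rpow_one] at this
        have h2 : (p:ℝ) < (B:ℝ) + 1 := lt_of_lt_of_le h1 (by
          calc (2:ℝ) ^ (1/δ) ≤ (B:ℝ) := Nat.le_ceil _
            _ ≤ (B:ℝ) + 1 := by linarith)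
        have : (p:ℝ) < ((B+1 : ℕ) : ℝ) := by push_cast; linarith
        exact_mod_cast this
      calc _ ≤ (Finset.range (B+1)).card := Finset.card_le_card hsub
        _ = B + 1 := Finset.card_range _
    exact pow_le_pow_right₀ hc₀ hcard
  calc (m.divisors.card : ℝ) ≤ _ := step1
    _ ≤ c₀ ^ (B+1) * (m:ℝ) ^ δ := by
        apply mul_le_mul_of_nonneg_right step2 (Real.rpow_nonneg (by positivity) _)

lemma card_le_two_of_pm (s : Finset ℤ) (h : ∀ a ∈ s, ∀ b ∈ s, a = b ∨ a = -b) :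
    s.card ≤ 2 := by
  rcases s.eq_empty_or_nonempty with rfl | ⟨a₀, ha₀⟩
  · simp
  · have hs : s ⊆ {a₀, -a₀} := by
      intro b hb
      rcases h b hb a₀ ha₀ with h' | h' <;> simp [h']
    calc s.card ≤ ({a₀, -a₀} : Finset ℤ).card := Finset.card_le_card hs
      _ ≤ 2 := (Finset.card_insert_le _ _).trans (by simp)

lemma intZeroOfDvdSmall {q a : ℤ} (hd : q ∣ a) (hs : |a| < q) : a = 0 := by
  by_contra h
  have h2 : q ≤ |a| := Int.le_of_dvd (abs_pos.mpr h) ((dvd_abs q a).mpr hd)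
  omega

section scratch

variable (p n : ℕ) (β₁ β₂ β₃ : ℤ) (M : ℝ)

-- the main counting estimate, in the large-q regime
set_option maxHeartbeats 2000000 in
theorem main_est (hp : p.Prime) (hodd : Odd p) (hn : 1 ≤ n)
    (hβ₁ : ¬ (p : ℤ) ∣ β₁) (hβ₂ : ¬ (p : ℤ) ∣ β₂) (hβ₃ : ¬ (p : ℤ) ∣ β₃)
    (hM1 : 1 ≤ M) (hbig : 2 * M ^ 2 + 1 ≤ ((p ^ n : ℕ) : ℝ))
    (Cδ : ℝ) (hCδ1 : 1 ≤ Cδ) (ε : ℝ) (hε : 0 < ε)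
    (hCδ : ∀ m : ℕ, m ≠ 0 → (m.divisors.card : ℝ) ≤ Cδ * (m : ℝ) ^ ε) :
    ((sigmaCount p β₁ β₂ β₃ M (p ^ n) : ℝ)) ^ 2 ≤
      (216 + 108 * Cδ) * ((M ^ (3 : ℕ)) * ((M ^ (2 : ℕ) : ℝ)) ^ ε) := by
  classical
  set q : ℕ := p ^ n with hqdef
  have hM0 : (0:ℝ) < M := lt_of_lt_of_le one_pos hM1
  have hqpos : 0 < q := Nat.pow_pos hp.pos
  set F : ℤ := ⌊M⌋ with hFdef
  have hF1 : 1 ≤ F := by rwa [hFdef, Int.le_floor, Int.cast_one]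
  have hFM : (F : ℝ) ≤ M := Int.floor_le M
  set I : Finset ℤ := Finset.Icc (-F) F with hIdef
  have hcardI : ((I.card : ℝ)) ≤ 3 * M := by
    rw [hIdef, Int.card_Icc]
    have h1 : F + 1 - -F = 2*F + 1 := by ring
    rw [h1]
    have h2 : ((2*F+1).toNat : ℤ) = 2*F+1 := Int.toNat_of_nonneg (by omega)
    have : (((2*F+1).toNat : ℤ) : ℝ) = 2*(F:ℝ)+1 := by rw [h2]; push_cast; ring
    rw [← Int.cast_natCast ((2*F+1).toNat), this]
    linarith
  -- the solution set as a finset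
  set sol : Finset (ℤ × ℤ × ℤ) := (I ×ˢ I ×ˢ I).filter
    (fun x => ¬ (p : ℤ) ∣ x.1 * x.2.1 * x.2.2 ∧
      (q : ℤ) ∣ β₁ * x.1 ^ 2 + β₂ * x.2.1 ^ 2 + β₃ * x.2.2 ^ 2) with hsoldef
  have habsF : ∀ x : ℤ, ((|x| : ℤ) : ℝ) ≤ M → x ∈ I := by
    intro x hx
    have : |x| ≤ F := by rwa [hFdef, Int.le_floor]
    rw [hIdef, Finset.mem_Icc]
    exact abs_le.mp this
  have hcount : (sigmaCount p β₁ β₂ β₃ M q : ℝ) ≤ (sol.card : ℝ) := by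
    have hsub : {x : ℤ × ℤ × ℤ |
        ((|x.1| : ℤ) : ℝ) ≤ M ∧ ((|x.2.1| : ℤ) : ℝ) ≤ M ∧ ((|x.2.2| : ℤ) : ℝ) ≤ M ∧
        ¬ (p : ℤ) ∣ x.1 * x.2.1 * x.2.2 ∧
        (q : ℤ) ∣ β₁ * x.1 ^ 2 + β₂ * x.2.1 ^ 2 + β₃ * x.2.2 ^ 2} ⊆ ↑sol := by
      intro x hx
      obtain ⟨h1, h2, h3, h4, h5⟩ := hx
      simp only [hsoldef, Finset.coe_filter, Set.mem_setOf_eq, Finset.mem_product]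
      exact ⟨⟨habsF _ h1, habsF _ h2, habsF _ h3⟩, h4, h5⟩
    have : sigmaCount p β₁ β₂ β₃ M q ≤ sol.card := by
      rw [sigmaCount, Nat.card_coe_set_eq]
      calc _ ≤ (↑sol : Set (ℤ × ℤ × ℤ)).ncard := Set.ncard_le_ncard hsub sol.finite_toSet
        _ = sol.card := Set.ncard_coe_finset sol
    exact_mod_cast this
  -- coprimality and size facts
  have hpZ : Prime (p : ℤ) := Nat.prime_iff_prime_int.mp hp
  have hQ : (q : ℤ) = (p:ℤ) ^ n := by rw [hqdef]; push_cast; ring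
  have hQpos : (0:ℤ) < (q:ℤ) := by exact_mod_cast hqpos
  have cop : ∀ β : ℤ, ¬ (p:ℤ) ∣ β → IsCoprime ((q:ℤ)) β := by
    intro β hβ
    rw [hQ]
    exact (hpZ.irreducible.coprime_iff_not_dvd.mpr hβ).pow_left
  have hp2 : ¬ (p:ℤ) ∣ 2 := by
    intro h
    have h2 : (p:ℕ) ∣ 2 := by exact_mod_cast h
    have h3 := Nat.le_of_dvd (by norm_num) h2
    have h4 := hp.two_le
    have h5 := Nat.odd_iff.mp hodd
    omega
  have hFR : (1:ℝ) ≤ (F:ℝ) := by exact_mod_cast hF1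
  have hFsqM : ((F:ℝ))^2 ≤ M^2 := by nlinarith
  have hFsq : 2*F^2 < (q:ℤ) := by
    have h1 : (2*(F:ℝ)^2 + 1) ≤ ((q:ℕ):ℝ) := by
      calc 2*(F:ℝ)^2 + 1 ≤ 2*M^2 + 1 := by linarith
        _ ≤ _ := hbig
    have h2 : ((2*F^2 + 1 : ℤ) : ℝ) ≤ (((q:ℕ):ℤ) : ℝ) := by push_cast; push_cast at h1; linarith
    have h3 : (2*F^2 + 1 : ℤ) ≤ ((q:ℕ):ℤ) := by exact_mod_cast h2
    omega
  have hFlin : 2*F < (q:ℤ) := by nlinarith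
  have memIabs : ∀ a : ℤ, a ∈ I → |a| ≤ F := by
    intro a ha
    rw [hIdef, Finset.mem_Icc] at ha
    exact abs_le.mpr ha
  have hmem : ∀ y : ℤ × ℤ × ℤ, y ∈ sol ↔
      (y.1 ∈ I ∧ y.2.1 ∈ I ∧ y.2.2 ∈ I) ∧
      (¬ (p:ℤ) ∣ y.1*y.2.1*y.2.2 ∧
        (q:ℤ) ∣ β₁*y.1^2 + β₂*y.2.1^2 + β₃*y.2.2^2) := by
    intro y
    rw [hsoldef, Finset.mem_filter, Finset.mem_product, Finset.mem_product]
  -- at most two values of the leading coordinate over a common tail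
  have key : ∀ u : ℤ × ℤ, ∀ a b : ℤ, (a, u) ∈ sol → (b, u) ∈ sol → a = b ∨ a = -b := by
    intro u a b ha hb
    rw [hmem] at ha hb
    have hda : ¬ (p:ℤ) ∣ a := by
      intro h
      exact ha.2.1 ((h.mul_right u.1).mul_right u.2)
    have hd : (q:ℤ) ∣ β₁*((a - b)*(a + b)) := by
      have h1 := ha.2.2
      have h2 := hb.2.2
      have h3 : β₁*a^2 + β₂*u.1^2 + β₃*u.2^2 - (β₁*b^2 + β₂*u.1^2 + β₃*u.2^2)
          = β₁*((a-b)*(a+b)) := by ring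
      have h4 := dvd_sub h1 h2
      rwa [h3] at h4
    have hd2 : (q:ℤ) ∣ (a-b)*(a+b) := (cop β₁ hβ₁).dvd_of_dvd_mul_left hd
    have haF : |a| ≤ F := memIabs _ ha.1.1
    have hbF : |b| ≤ F := memIabs _ hb.1.1
    by_cases hsplit : (p:ℤ) ∣ (a+b)
    · have hnd : ¬ (p:ℤ) ∣ (a-b) := by
        intro h
        have h' : (p:ℤ) ∣ 2*a := by
          have := dvd_add h hsplit
          rwa [show a-b+(a+b) = 2*a by ring] at this
        rcases hpZ.dvd_mul.mp h' with h'' | h''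
        exacts [hp2 h'', hda h'']
      have hq2 : (q:ℤ) ∣ (a+b) := (cop _ hnd).dvd_of_dvd_mul_left hd2
      right
      have hz : a + b = 0 := by
        refine intZeroOfDvdSmall hq2 ?_
        calc |a+b| ≤ |a| + |b| := abs_add_le _ _
          _ ≤ 2*F := by omega
          _ < (q:ℤ) := hFlin
      omega
    · have hq2 : (q:ℤ) ∣ (a-b) := (cop _ hsplit).dvd_of_dvd_mul_right hd2
      left
      have hz : a - b = 0 := by
        refine intZeroOfDvdSmall hq2 ?_
        calc |a-b| ≤ |a| + |b| := abs_sub _ _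
          _ ≤ 2*F := by omega
          _ < (q:ℤ) := hFlin
      omega
  -- fiberwise decomposition over the first coordinate
  set tail : ℤ → Finset (ℤ × ℤ) :=
    fun a => (sol.filter (fun x => x.1 = a)).image Prod.snd with htaildef
  have htail_mem : ∀ a : ℤ, ∀ u : ℤ × ℤ, u ∈ tail a ↔ (a, u) ∈ sol := by
    intro a u
    simp only [htaildef, Finset.mem_image, Finset.mem_filter]
    constructor
    · rintro ⟨x, ⟨hx, h1⟩, h2⟩
      rw [← h1, ← h2, Prod.mk.eta]
      exact hx
    · intro h
      exact ⟨(a, u), ⟨h, rfl⟩, rfl⟩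
  have hsolcard : sol.card = ∑ a ∈ I, (sol.filter (fun x => x.1 = a)).card :=
    Finset.card_eq_sum_card_fiberwise (fun x hx => ((hmem x).mp hx).1.1)
  have hfibcard : ∀ a : ℤ, (sol.filter (fun x => x.1 = a)).card = (tail a).card := by
    intro a
    rw [htaildef]
    exact (Finset.card_image_of_injOn (fun x hx y hy hxy => by
      rw [Finset.mem_coe, Finset.mem_filter] at hx hy
      exact Prod.ext (hx.2.trans hy.2.symm) hxy)).symm
  have hCS : ((sol.card : ℝ))^2 ≤ (I.card : ℝ) * ∑ a ∈ I, ((tail a).card : ℝ)^2 := by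
    have h1 : (sol.card : ℝ) = ∑ a ∈ I, ((tail a).card : ℝ) := by
      rw [hsolcard]
      push_cast
      exact Finset.sum_congr rfl (fun a _ => by rw [hfibcard])
    rw [h1]
    exact sq_sum_le_card_mul_sum_sq
  -- the quadruple count
  set W : Finset ((ℤ×ℤ)×(ℤ×ℤ)) := ((I ×ˢ I) ×ˢ (I ×ˢ I)).filter
    (fun w => (q:ℤ) ∣ β₂*(w.1.1^2 - w.2.1^2) + β₃*(w.1.2^2 - w.2.2^2)) with hWdef
  have hWmem : ∀ w : (ℤ×ℤ)×(ℤ×ℤ), w ∈ W ↔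
      ((w.1.1 ∈ I ∧ w.1.2 ∈ I) ∧ (w.2.1 ∈ I ∧ w.2.2 ∈ I)) ∧
      (q:ℤ) ∣ β₂*(w.1.1^2 - w.2.1^2) + β₃*(w.1.2^2 - w.2.2^2) := by
    intro w
    rw [hWdef, Finset.mem_filter, Finset.mem_product, Finset.mem_product,
      Finset.mem_product]
  have hsum_sq : ∑ a ∈ I, ((tail a).card)^2 ≤ 2 * W.card := by
    have h1 : ∑ a ∈ I, ((tail a).card)^2 = (I.sigma (fun a => tail a ×ˢ tail a)).card := by
      rw [Finset.card_sigma]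
      exact Finset.sum_congr rfl (fun a _ => by rw [Finset.card_product]; ring)
    rw [h1]
    have hmaps : ∀ z ∈ I.sigma (fun a => tail a ×ˢ tail a), z.2 ∈ W := by
      intro z hz
      rw [Finset.mem_sigma] at hz
      obtain ⟨hz1, hz2⟩ := hz
      rw [Finset.mem_product] at hz2
      have hu := (htail_mem _ _).mp hz2.1
      have hv := (htail_mem _ _).mp hz2.2
      rw [hmem] at hu hv
      rw [hWmem]
      refine ⟨⟨⟨hu.1.2.1, hu.1.2.2⟩, ⟨hv.1.2.1, hv.1.2.2⟩⟩, ?_⟩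
      have h2 := dvd_sub hu.2.2 hv.2.2
      have h3 : β₁*z.1^2 + β₂*z.2.1.1^2 + β₃*z.2.1.2^2
          - (β₁*z.1^2 + β₂*z.2.2.1^2 + β₃*z.2.2.2^2)
          = β₂*(z.2.1.1^2 - z.2.2.1^2) + β₃*(z.2.1.2^2 - z.2.2.2^2) := by ring
      rwa [h3] at h2
    rw [Finset.card_eq_sum_card_fiberwise hmaps]
    have hfib2 : ∀ w ∈ W,
        ((I.sigma (fun a => tail a ×ˢ tail a)).filter (fun z => z.2 = w)).card ≤ 2 := by
      intro w hw
      have hinj : ((I.sigma (fun a => tail a ×ˢ tail a)).filter (fun z => z.2 = w)).card ≤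
          (I.filter (fun a => (a, w.1) ∈ sol ∧ (a, w.2) ∈ sol)).card := by
        apply Finset.card_le_card_of_injOn (fun z => z.1)
        · intro z hz
          rw [Finset.mem_coe, Finset.mem_filter, Finset.mem_sigma, Finset.mem_product] at hz
          rw [Finset.mem_coe, Finset.mem_filter]
          obtain ⟨⟨hzI, hz1, hz2⟩, hzw⟩ := hz
          rw [htail_mem] at hz1 hz2
          rw [hzw] at hz1 hz2
          exact ⟨hzI, hz1, hz2⟩
        · intro z hz z' hz' hzz
          rw [Finset.mem_coe, Finset.mem_filter] at hz hz'
          have : z.2 = z'.2 := hz.2.trans hz'.2.symm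
          exact Sigma.ext hzz (heq_of_eq this)
      refine le_trans hinj (card_le_two_of_pm _ ?_)
      intro a ha b hb
      rw [Finset.mem_filter] at ha hb
      exact key w.1 a b ha.2.1 hb.2.1
    calc ∑ w ∈ W, ((I.sigma (fun a => tail a ×ˢ tail a)).filter (fun z => z.2 = w)).card
        ≤ ∑ _w ∈ W, 2 := Finset.sum_le_sum hfib2
      _ = 2 * W.card := by rw [Finset.sum_const]; ring
  -- split W by vanishing of the first difference
  set W₀ := W.filter (fun w => w.1.1^2 - w.2.1^2 = 0) with hW0def
  set W₁ := W.filter (fun w => ¬ (w.1.1^2 - w.2.1^2 = 0)) with hW1def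
  have hWsplit : W₀.card + W₁.card = W.card :=
    Finset.card_filter_add_card_filter_not _
  have hsqF : ∀ a : ℤ, a ∈ I → a^2 ≤ F^2 := by
    intro a ha
    rw [hIdef, Finset.mem_Icc] at ha
    nlinarith [ha.1, ha.2]
  have hF2q : F^2 < (q:ℤ) := by nlinarith [sq_nonneg F]
  -- elements of W₀ have both differences vanishing
  have hpm0 : ∀ w ∈ W₀, (w.1.1 = w.2.1 ∨ w.1.1 = -w.2.1) ∧
      (w.1.2 = w.2.2 ∨ w.1.2 = -w.2.2) := by
    intro w hw
    rw [hW0def, Finset.mem_filter] at hw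
    obtain ⟨hwW, hA⟩ := hw
    rw [hWmem] at hwW
    constructor
    · have h1 : (w.1.1 - w.2.1) * (w.1.1 + w.2.1) = 0 := by linear_combination hA
      rcases mul_eq_zero.mp h1 with h2 | h2
      · left; omega
      · right; omega
    · have h5 : β₂*(w.1.1^2 - w.2.1^2) + β₃*(w.1.2^2 - w.2.2^2)
          = β₃*(w.1.2^2 - w.2.2^2) := by rw [hA]; ring
      have h6 : (q:ℤ) ∣ β₃*(w.1.2^2 - w.2.2^2) := by rw [← h5]; exact hwW.2
      have h7 : (q:ℤ) ∣ (w.1.2^2 - w.2.2^2) := (cop β₃ hβ₃).dvd_of_dvd_mul_left h6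
      have h8 : |w.1.2^2 - w.2.2^2| ≤ F^2 := by
        have ha1 := hsqF _ hwW.1.1.2
        have ha2 := hsqF _ hwW.1.2.2
        have hb1 := sq_nonneg w.1.2
        have hb2 := sq_nonneg w.2.2
        rw [abs_le]
        constructor <;> linarith
      have h9 : w.1.2^2 - w.2.2^2 = 0 :=
        intZeroOfDvdSmall h7 (lt_of_le_of_lt h8 hF2q)
      have h10 : (w.1.2 - w.2.2) * (w.1.2 + w.2.2) = 0 := by linear_combination h9
      rcases mul_eq_zero.mp h10 with h11 | h11
      · left; omega
      · right; omega
  have hW0 : W₀.card ≤ 4 * I.card^2 := by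
    have hle := Finset.card_le_card_of_injOn
      (f := fun w : (ℤ×ℤ)×(ℤ×ℤ) => (w.2,
        ((if w.1.1 = w.2.1 then (1:ℤ) else -1), (if w.1.2 = w.2.2 then (1:ℤ) else -1))))
      (s := W₀) (t := (I ×ˢ I) ×ˢ (({1, -1} : Finset ℤ) ×ˢ ({1, -1} : Finset ℤ)))
      (by
        intro w hw
        have hwW : w ∈ W := Finset.mem_of_mem_filter _ hw
        rw [hWmem] at hwW
        rw [Finset.mem_coe, Finset.mem_product, Finset.mem_product, Finset.mem_product]
        refine ⟨⟨hwW.1.2.1, hwW.1.2.2⟩, ?_, ?_⟩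
        · by_cases h : w.1.1 = w.2.1 <;> simp [h]
        · by_cases h : w.1.2 = w.2.2 <;> simp [h])
      (by
        intro w hw w' hw' hzz
        simp only [Prod.mk.injEq] at hzz
        obtain ⟨h2, hf1, hf2⟩ := hzz
        rw [Finset.mem_coe] at hw hw'
        have hpm := hpm0 w hw
        have hpm' := hpm0 w' hw'
        have h21 : w.2.1 = w'.2.1 := by rw [h2]
        have h22 : w.2.2 = w'.2.2 := by rw [h2]
        have e1 : w.1.1 = w'.1.1 := by
          by_cases hc : w.1.1 = w.2.1 <;> by_cases hc' : w'.1.1 = w'.2.1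
          · omega
          · rw [if_pos hc, if_neg hc'] at hf1; norm_num at hf1
          · rw [if_neg hc, if_pos hc'] at hf1; norm_num at hf1
          · have := hpm.1.resolve_left hc
            have := hpm'.1.resolve_left hc'
            omega
        have e2 : w.1.2 = w'.1.2 := by
          by_cases hc : w.1.2 = w.2.2 <;> by_cases hc' : w'.1.2 = w'.2.2
          · omega
          · rw [if_pos hc, if_neg hc'] at hf2; norm_num at hf2
          · rw [if_neg hc, if_pos hc'] at hf2; norm_num at hf2
          · have := hpm.2.resolve_left hc
            have := hpm'.2.resolve_left hc'
            omega
        exact Prod.ext (Prod.ext e1 e2) h2)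
    calc W₀.card ≤ _ := hle
      _ = 4 * I.card^2 := by
        rw [Finset.card_product, Finset.card_product, Finset.card_product,
          Finset.card_insert_of_notMem (by norm_num), Finset.card_singleton]
        ring
  -- the W₁ bound via the divisor function
  set X : ℝ := ((M ^ (2:ℕ) : ℝ)) ^ ε with hXdef
  have hX0 : 0 ≤ X := Real.rpow_nonneg (by positivity) _
  have hX1 : 1 ≤ X := by
    rw [hXdef]
    calc (1:ℝ) = (1:ℝ) ^ ε := (Real.one_rpow ε).symm
      _ ≤ (M ^ (2:ℕ) : ℝ) ^ ε := Real.rpow_le_rpow (by norm_num) (one_le_pow₀ hM1) hε.le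
  have hfibW1 : ∀ ab ∈ I ×ˢ I,
      ((W₁.filter (fun w => (w.1.1, w.2.1) = ab)).card : ℝ) ≤ 2 * Cδ * X := by
    intro ab _
    set fib := W₁.filter (fun w => (w.1.1, w.2.1) = ab) with hfibdef
    rcases fib.eq_empty_or_nonempty with hemp | ⟨w₀, hw₀⟩
    · rw [hemp]
      simp only [Finset.card_empty, Nat.cast_zero]
      positivity
    · have hw₀fib := hw₀
      rw [hfibdef, Finset.mem_filter, hW1def, Finset.mem_filter] at hw₀
      obtain ⟨⟨hw₀W, hA₀⟩, hab₀⟩ := hw₀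
      set B₀ : ℤ := w₀.1.2^2 - w₀.2.2^2 with hB₀def
      -- B₀ is nonzero
      have hB₀ : B₀ ≠ 0 := by
        intro h0
        rw [hWmem] at hw₀W
        have h5 : β₂*(w₀.1.1^2 - w₀.2.1^2) + β₃*(w₀.1.2^2 - w₀.2.2^2)
            = β₂*(w₀.1.1^2 - w₀.2.1^2) := by rw [← hB₀def, h0]; ring
        have h6 : (q:ℤ) ∣ β₂*(w₀.1.1^2 - w₀.2.1^2) := by rw [← h5]; exact hw₀W.2
        have h7 : (q:ℤ) ∣ (w₀.1.1^2 - w₀.2.1^2) := (cop β₂ hβ₂).dvd_of_dvd_mul_left h6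
        have h8 : |w₀.1.1^2 - w₀.2.1^2| ≤ F^2 := by
          have ha1 := hsqF _ hw₀W.1.1.1
          have ha2 := hsqF _ hw₀W.1.2.1
          have hb1 := sq_nonneg w₀.1.1
          have hb2 := sq_nonneg w₀.2.1
          rw [abs_le]; constructor <;> linarith
        exact hA₀ (intZeroOfDvdSmall h7 (lt_of_le_of_lt h8 hF2q))
      -- all elements of the fiber share the same second difference B₀
      have hBall : ∀ w ∈ fib, w.1.2^2 - w.2.2^2 = B₀ := by
        intro w hw
        rw [hfibdef, Finset.mem_filter, hW1def, Finset.mem_filter] at hw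
        obtain ⟨⟨hwW, hA⟩, hab⟩ := hw
        rw [hWmem] at hwW
        have hw₀W' := hw₀W
        rw [hWmem] at hw₀W'
        have hc1 : w.1.1 = w₀.1.1 := by
          have := hab.trans hab₀.symm
          exact (Prod.mk.injEq _ _ _ _).mp this |>.1
        have hc2 : w.2.1 = w₀.2.1 := by
          have := hab.trans hab₀.symm
          exact (Prod.mk.injEq _ _ _ _).mp this |>.2
        have h2 := dvd_sub hwW.2 hw₀W'.2
        have h3 : β₂*(w.1.1^2 - w.2.1^2) + β₃*(w.1.2^2 - w.2.2^2)
            - (β₂*(w₀.1.1^2 - w₀.2.1^2) + β₃*(w₀.1.2^2 - w₀.2.2^2))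
            = β₃*((w.1.2^2 - w.2.2^2) - B₀) := by
          rw [hc1, hc2, hB₀def]; ring
        rw [h3] at h2
        have h4 : (q:ℤ) ∣ ((w.1.2^2 - w.2.2^2) - B₀) := (cop β₃ hβ₃).dvd_of_dvd_mul_left h2
        have h8 : |(w.1.2^2 - w.2.2^2) - B₀| ≤ 2*F^2 := by
          have ha1 := hsqF _ hwW.1.1.2
          have ha2 := hsqF _ hwW.1.2.2
          have ha3 := hsqF _ hw₀W'.1.1.2
          have ha4 := hsqF _ hw₀W'.1.2.2
          have hb1 := sq_nonneg w.1.2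
          have hb2 := sq_nonneg w.2.2
          have hb3 := sq_nonneg w₀.1.2
          have hb4 := sq_nonneg w₀.2.2
          rw [hB₀def, abs_le]; constructor <;> linarith
        have h9 := intZeroOfDvdSmall h4 (lt_of_le_of_lt h8 hFsq)
        omega
      -- inject the fiber into signed divisors of B₀
      set D : Finset ℤ := (B₀.natAbs.divisors.image (fun d : ℕ => (d:ℤ))) ∪
        (B₀.natAbs.divisors.image (fun d : ℕ => -(d:ℤ))) with hDdef
      have hcardfib : fib.card ≤ D.card := by
        apply Finset.card_le_card_of_injOn (fun w => w.1.2 - w.2.2)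
        · intro w hw
          have hB := hBall w hw
          have hdvd : (w.1.2 - w.2.2) ∣ B₀ := ⟨w.1.2 + w.2.2, by rw [← hB]; ring⟩
          have hne : w.1.2 - w.2.2 ≠ 0 := by
            intro h0
            apply hB₀
            rw [← hB]
            have : w.1.2 = w.2.2 := by omega
            rw [this]; ring
          rw [hDdef, Finset.mem_coe, Finset.mem_union]
          have hmemdiv : (w.1.2 - w.2.2).natAbs ∈ B₀.natAbs.divisors :=
            Nat.mem_divisors.mpr ⟨Int.natAbs_dvd_natAbs.mpr hdvd, Int.natAbs_ne_zero.mpr hB₀⟩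
          rcases Int.natAbs_eq (w.1.2 - w.2.2) with he | he
          · left; exact Finset.mem_image.mpr ⟨_, hmemdiv, he.symm⟩
          · right; exact Finset.mem_image.mpr ⟨_, hmemdiv, he.symm⟩
        · intro w hw w' hw' hd
          rw [Finset.mem_coe] at hw hw'
          have hB := hBall w hw
          have hB' := hBall w' hw'
          rw [hfibdef, Finset.mem_filter] at hw hw'
          have hab := hw.2
          have hab' := hw'.2
          have h11 : w.1.1 = w'.1.1 := by
            have := hab.trans hab'.symm
            exact (Prod.mk.injEq _ _ _ _).mp this |>.1
          have h21 : w.2.1 = w'.2.1 := by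
            have := hab.trans hab'.symm
            exact (Prod.mk.injEq _ _ _ _).mp this |>.2
          have hdne : w.1.2 - w.2.2 ≠ 0 := by
            intro h0
            apply hB₀
            rw [← hB]
            have : w.1.2 = w.2.2 := by omega
            rw [this]; ring
          have hd' : w.1.2 - w.2.2 = w'.1.2 - w'.2.2 := hd
          have hsum : w.1.2 + w.2.2 = w'.1.2 + w'.2.2 := by
            have e1 : (w.1.2 - w.2.2) * (w.1.2 + w.2.2) = B₀ := by rw [← hB]; ring
            have e2 : (w'.1.2 - w'.2.2) * (w'.1.2 + w'.2.2) = B₀ := by rw [← hB']; ring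
            have e3 : (w.1.2 - w.2.2) * (w.1.2 + w.2.2)
                = (w.1.2 - w.2.2) * (w'.1.2 + w'.2.2) := by
              rw [e1, hd', e2]
            exact mul_left_cancel₀ hdne e3
          have h12 : w.1.2 = w'.1.2 := by omega
          have h22 : w.2.2 = w'.2.2 := by omega
          exact Prod.ext (Prod.ext h11 h12) (Prod.ext h21 h22)
      have hcardD : D.card ≤ 2 * B₀.natAbs.divisors.card := by
        have h0 := Finset.card_union_le (B₀.natAbs.divisors.image (fun d : ℕ => (d:ℤ)))
          (B₀.natAbs.divisors.image (fun d : ℕ => -(d:ℤ)))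
        have h1 := Finset.card_image_le (s := B₀.natAbs.divisors) (f := fun d : ℕ => (d:ℤ))
        have h2 := Finset.card_image_le (s := B₀.natAbs.divisors) (f := fun d : ℕ => -(d:ℤ))
        rw [hDdef]
        omega
      have hτ : (B₀.natAbs.divisors.card : ℝ) ≤ Cδ * X := by
        have h1 := hCδ B₀.natAbs (Int.natAbs_ne_zero.mpr hB₀)
        have h2 : ((B₀.natAbs : ℕ) : ℝ) ≤ (M ^ (2:ℕ) : ℝ) := by
          have h3 : |B₀| ≤ F^2 := by
            rw [hWmem] at hw₀W
            have ha1 := hsqF _ hw₀W.1.1.2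
            have ha2 := hsqF _ hw₀W.1.2.2
            have hb1 := sq_nonneg w₀.1.2
            have hb2 := sq_nonneg w₀.2.2
            rw [hB₀def, abs_le]; constructor <;> linarith
          have h4 : ((B₀.natAbs : ℤ) : ℝ) ≤ ((F^2 : ℤ) : ℝ) := by
            exact_mod_cast (Int.abs_eq_natAbs B₀ ▸ h3)
          push_cast at h4 ⊢
          rw [Nat.cast_natAbs, Int.cast_abs]
          linarith
        calc (B₀.natAbs.divisors.card : ℝ) ≤ Cδ * (B₀.natAbs : ℝ) ^ ε := h1
          _ ≤ Cδ * X := by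
            rw [hXdef]
            apply mul_le_mul_of_nonneg_left _ (by linarith)
            exact Real.rpow_le_rpow (by positivity) h2 hε.le
      calc ((fib.card : ℕ) : ℝ) ≤ (D.card : ℝ) := by exact_mod_cast hcardfib
        _ ≤ 2 * (B₀.natAbs.divisors.card : ℝ) := by exact_mod_cast hcardD
        _ ≤ 2 * (Cδ * X) := by linarith
        _ = 2 * Cδ * X := by ring
  have hW1R : (W₁.card : ℝ) ≤ (I.card : ℝ)^2 * (2 * Cδ * X) := by
    have hmaps : ∀ w ∈ W₁, (w.1.1, w.2.1) ∈ I ×ˢ I := by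
      intro w hw
      rw [hW1def, Finset.mem_filter] at hw
      have := hw.1
      rw [hWmem] at this
      rw [Finset.mem_product]
      exact ⟨this.1.1.1, this.1.2.1⟩
    rw [Finset.card_eq_sum_card_fiberwise hmaps]
    push_cast
    calc ∑ ab ∈ I ×ˢ I, ((W₁.filter (fun w => (w.1.1, w.2.1) = ab)).card : ℝ)
        ≤ ∑ _ab ∈ I ×ˢ I, (2 * Cδ * X) := Finset.sum_le_sum hfibW1
      _ = ((I ×ˢ I).card : ℝ) * (2 * Cδ * X) := by rw [Finset.sum_const]; simp
      _ = (I.card : ℝ)^2 * (2 * Cδ * X) := by rw [Finset.card_product]; push_cast; ring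
  -- assemble the main estimate
  have hsum_sqR : (∑ a ∈ I, ((tail a).card : ℝ)^2) ≤ 2 * (W.card : ℝ) := by
    exact_mod_cast hsum_sq
  have hW0R : (W₀.card : ℝ) ≤ 4 * (I.card : ℝ)^2 := by exact_mod_cast hW0
  have hWR : (W.card : ℝ) = (W₀.card : ℝ) + (W₁.card : ℝ) := by exact_mod_cast hWsplit.symm
  have hIpos : (0:ℝ) ≤ (I.card : ℝ) := Nat.cast_nonneg _
  have hI2 : (I.card : ℝ)^2 ≤ 9 * M^2 := by nlinarith
  have h1 : ((sol.card : ℝ))^2 ≤ (3*M) * (2 * (W.card : ℝ)) := by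
    calc ((sol.card : ℝ))^2 ≤ (I.card : ℝ) * ∑ a ∈ I, ((tail a).card : ℝ)^2 := hCS
      _ ≤ (I.card : ℝ) * (2 * (W.card : ℝ)) :=
          mul_le_mul_of_nonneg_left hsum_sqR hIpos
      _ ≤ (3*M) * (2 * (W.card : ℝ)) := by
          apply mul_le_mul_of_nonneg_right hcardI (by positivity)
  have h2 : (W.card : ℝ) ≤ 9*M^2 * (4 + 2*Cδ*X) := by
    rw [hWR]
    have e0 : (0:ℝ) ≤ 2*Cδ*X := by positivity
    have e1 : (W₁.card : ℝ) ≤ 9*M^2 * (2*Cδ*X) :=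
      le_trans hW1R (mul_le_mul_of_nonneg_right hI2 e0)
    nlinarith
  have hM3 : (0:ℝ) ≤ M^(3:ℕ) := by positivity
  have main : ((sol.card : ℝ))^2 ≤ (216 + 108*Cδ) * (M^(3:ℕ) * X) := by
    have h3 : ((sol.card : ℝ))^2 ≤ (3*M) * (2 * (9*M^2 * (4 + 2*Cδ*X))) := by
      refine le_trans h1 ?_
      apply mul_le_mul_of_nonneg_left _ (by positivity)
      linarith
    have h4 : (3*M) * (2 * (9*M^2 * (4 + 2*Cδ*X))) = 216*M^(3:ℕ) + 108*Cδ*M^(3:ℕ)*X := by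
      ring
    rw [h4] at h3
    have h5 : (0:ℝ) ≤ M^(3:ℕ) * (X - 1) := mul_nonneg hM3 (by linarith)
    nlinarith
  have hSnn : (0:ℝ) ≤ (sigmaCount p β₁ β₂ β₃ M q : ℝ) := Nat.cast_nonneg _
  calc ((sigmaCount p β₁ β₂ β₃ M q : ℝ))^2 ≤ ((sol.card : ℝ))^2 :=
      pow_le_pow_left₀ hSnn hcount 2
    _ ≤ (216 + 108*Cδ) * (M^(3:ℕ) * X) := main
    _ = (216 + 108*Cδ) * ((M ^ (3:ℕ)) * ((M ^ (2:ℕ) : ℝ)) ^ ε) := by rw [hXdef]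

theorem triv_bound (p : ℕ) (β₁ β₂ β₃ : ℤ) (M : ℝ) (q : ℕ) (hM1 : 1 ≤ M) :
    (sigmaCount p β₁ β₂ β₃ M q : ℝ) ≤ 27 * M^(3:ℕ) := by
  classical
  set F : ℤ := ⌊M⌋ with hFdef
  have hF1 : 1 ≤ F := by rwa [hFdef, Int.le_floor, Int.cast_one]
  have hFM : (F : ℝ) ≤ M := Int.floor_le M
  set I : Finset ℤ := Finset.Icc (-F) F with hIdef
  have hcardI : ((I.card : ℝ)) ≤ 3 * M := by
    rw [hIdef, Int.card_Icc]
    have h1 : F + 1 - -F = 2*F + 1 := by ring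
    rw [h1]
    have h2 : ((2*F+1).toNat : ℤ) = 2*F+1 := Int.toNat_of_nonneg (by omega)
    have h3 : (((2*F+1).toNat : ℤ) : ℝ) = 2*(F:ℝ)+1 := by rw [h2]; push_cast; ring
    rw [← Int.cast_natCast ((2*F+1).toNat), h3]
    linarith
  have hsub : {x : ℤ × ℤ × ℤ |
      ((|x.1| : ℤ) : ℝ) ≤ M ∧ ((|x.2.1| : ℤ) : ℝ) ≤ M ∧ ((|x.2.2| : ℤ) : ℝ) ≤ M ∧
      ¬ (p : ℤ) ∣ x.1 * x.2.1 * x.2.2 ∧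
      (q : ℤ) ∣ β₁ * x.1 ^ 2 + β₂ * x.2.1 ^ 2 + β₃ * x.2.2 ^ 2} ⊆ ↑(I ×ˢ I ×ˢ I) := by
    intro x hx
    obtain ⟨h1, h2, h3, -, -⟩ := hx
    have habs : ∀ y : ℤ, ((|y| : ℤ) : ℝ) ≤ M → y ∈ I := by
      intro y hy
      have : |y| ≤ F := by rwa [hFdef, Int.le_floor]
      rw [hIdef, Finset.mem_Icc]
      exact abs_le.mp this
    simp only [Finset.coe_product, Set.mem_prod]
    exact ⟨habs _ h1, habs _ h2, habs _ h3⟩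
  have hcount : sigmaCount p β₁ β₂ β₃ M q ≤ (I ×ˢ I ×ˢ I).card := by
    rw [sigmaCount, Nat.card_coe_set_eq]
    calc _ ≤ (↑(I ×ˢ I ×ˢ I) : Set (ℤ × ℤ × ℤ)).ncard :=
        Set.ncard_le_ncard hsub (I ×ˢ I ×ˢ I).finite_toSet
      _ = (I ×ˢ I ×ˢ I).card := Set.ncard_coe_finset _
  have hM0 : (0:ℝ) < M := by linarith
  calc (sigmaCount p β₁ β₂ β₃ M q : ℝ) ≤ ((I ×ˢ I ×ˢ I).card : ℝ) := by exact_mod_cast hcount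
    _ = ((I.card : ℝ)) * ((I.card : ℝ)) * ((I.card : ℝ)) := by
        rw [Finset.card_product, Finset.card_product]; push_cast; ring
    _ ≤ (3*M) * (3*M) * (3*M) := by
        have h0 : (0:ℝ) ≤ (I.card : ℝ) := Nat.cast_nonneg _
        have h1 : (0:ℝ) ≤ 3*M := by linarith
        apply mul_le_mul (mul_le_mul hcardI hcardI h0 h1) hcardI h0
        positivity
    _ = 27 * M^(3:ℕ) := by ring

/-- Uniformly in the odd prime power modulus `q = pⁿ` and the coefficients
coprime to `p`: if `1 ≤ M ≤ q^{1/2-ε}` then `Σ_{β₁,β₂,β₃}(M,q) ≪_ε M^{3/2+ε}`. -/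
theorem sigma_bound_three_halves (ε : ℝ) (hε : 0 < ε) :
    ∃ Cε : ℝ, 0 < Cε ∧
      ∀ (p : ℕ), p.Prime → Odd p → ∀ (n : ℕ), 1 ≤ n → ∀ (β₁ β₂ β₃ : ℤ),
        ¬ (p : ℤ) ∣ β₁ → ¬ (p : ℤ) ∣ β₂ → ¬ (p : ℤ) ∣ β₃ →
        ∀ M : ℝ, 1 ≤ M → M ≤ ((p : ℝ) ^ n) ^ ((1 : ℝ) / 2 - ε) →
          (sigmaCount p β₁ β₂ β₃ M (p ^ n) : ℝ) ≤ Cε * M ^ ((3 : ℝ) / 2 + ε) := by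
  obtain ⟨Cδ, hCδ1, hCδ⟩ := exists_divisor_bound ε hε
  set C₁ : ℝ := Real.sqrt (216 + 108*Cδ) with hC₁def
  set C₂ : ℝ := 27 * (3:ℝ) ^ ((3:ℝ)/(8*ε)) with hC₂def
  have hC₁ : 0 < C₁ := Real.sqrt_pos.mpr (by linarith)
  have hC₂ : 0 < C₂ := by
    rw [hC₂def]
    have : (0:ℝ) < (3:ℝ) ^ ((3:ℝ)/(8*ε)) := Real.rpow_pos_of_pos (by norm_num) _
    linarith
  refine ⟨C₁ + C₂, by linarith, ?_⟩
  intro p hp hodd n hn β₁ β₂ β₃ hβ₁ hβ₂ hβ₃ M hM1 hMq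
  have hM0 : (0:ℝ) < M := by linarith
  set q : ℕ := p ^ n with hqdef
  have hqR : ((p:ℝ))^n = (q:ℝ) := by rw [hqdef]; push_cast; ring
  rw [hqR] at hMq
  have hqpos : 0 < q := Nat.pow_pos hp.pos
  have hq0 : (0:ℝ) < (q:ℝ) := by exact_mod_cast hqpos
  have hq1 : (1:ℝ) ≤ (q:ℝ) := by exact_mod_cast hqpos
  have hYpos : (0:ℝ) < M ^ ((3:ℝ)/2 + ε) := Real.rpow_pos_of_pos hM0 _
  have hY : (M ^ ((3:ℝ)/2 + ε))^(2:ℕ) = M^(3:ℕ) * ((M^(2:ℕ):ℝ))^ε := by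
    rw [← Real.rpow_natCast (M ^ ((3:ℝ)/2 + ε)) 2, ← Real.rpow_mul hM0.le]
    rw [show ((3:ℝ)/2 + ε) * ((2:ℕ):ℝ) = 3 + 2*ε by push_cast; ring]
    rw [Real.rpow_add hM0, show (2:ℝ)*ε = ((2:ℕ):ℝ)*ε by push_cast; ring]
    rw [show ((3:ℝ)) = ((3:ℕ):ℝ) by push_cast; ring, Real.rpow_natCast]
    congr 1
    rw [← Real.rpow_natCast M 2, ← Real.rpow_mul hM0.le]
  by_cases hbig : (3:ℝ) ≤ (q:ℝ) ^ (2*ε)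
  · -- large modulus: the main estimate applies
    have hq3 : (3:ℝ) ≤ (q:ℝ) := by
      have h1 : p ≠ 2 := by
        intro h
        rw [h] at hodd
        exact (Nat.not_odd_iff_even.mpr (by norm_num)) hodd
      have h2 : 3 ≤ p := by
        have := hp.two_le
        omega
      have h3 : p ≤ q := by
        rw [hqdef]
        exact Nat.le_self_pow (by omega) p
      have : 3 ≤ q := le_trans h2 h3
      exact_mod_cast this
    have hMsq : 2*M^2 + 1 ≤ (q:ℝ) := by
      have h1 : M^2 ≤ ((q:ℝ) ^ ((1:ℝ)/2 - ε))^(2:ℕ) :=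
        pow_le_pow_left₀ hM0.le hMq 2
      have h2 : ((q:ℝ) ^ ((1:ℝ)/2 - ε))^(2:ℕ) = (q:ℝ) ^ ((1:ℝ) - 2*ε) := by
        rw [← Real.rpow_natCast ((q:ℝ) ^ ((1:ℝ)/2 - ε)) 2, ← Real.rpow_mul hq0.le]
        congr 1
        push_cast
        ring
      have h3 : (q:ℝ) ^ ((1:ℝ) - 2*ε) = (q:ℝ) / (q:ℝ) ^ (2*ε) := by
        rw [show (1:ℝ) - 2*ε = 1 + (-(2*ε)) by ring, Real.rpow_add hq0,
          Real.rpow_one, Real.rpow_neg hq0.le]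
        ring
      have h4 : (q:ℝ) / (q:ℝ) ^ (2*ε) ≤ (q:ℝ) / 3 := by
        apply div_le_div_of_nonneg_left hq0.le (by norm_num) hbig
      have h5 : M^2 ≤ (q:ℝ)/3 := by
        rw [h2, h3] at h1
        linarith
      linarith
    have hmain := main_est p n β₁ β₂ β₃ M hp hodd hn hβ₁ hβ₂ hβ₃ hM1
      (by rw [← hqdef]; exact hMsq) Cδ hCδ1 ε hε hCδ
    have hC₁sq : C₁^(2:ℕ) = 216 + 108*Cδ := Real.sq_sqrt (by linarith)
    have h6 : ((sigmaCount p β₁ β₂ β₃ M q : ℝ))^(2:ℕ) ≤ (C₁ * M ^ ((3:ℝ)/2 + ε))^(2:ℕ) := by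
      rw [mul_pow, hC₁sq, hY]
      exact hmain
    have h7 : (sigmaCount p β₁ β₂ β₃ M q : ℝ) ≤ C₁ * M ^ ((3:ℝ)/2 + ε) := by
      have hnn : (0:ℝ) ≤ (sigmaCount p β₁ β₂ β₃ M q : ℝ) := Nat.cast_nonneg _
      have hnn2 : (0:ℝ) ≤ C₁ * M ^ ((3:ℝ)/2 + ε) := by positivity
      nlinarith
    calc (sigmaCount p β₁ β₂ β₃ M q : ℝ) ≤ C₁ * M ^ ((3:ℝ)/2 + ε) := h7
      _ ≤ (C₁ + C₂) * M ^ ((3:ℝ)/2 + ε) := by nlinarith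
  · -- small modulus: the trivial bound suffices
    push_neg at hbig
    have hM12 : M ≤ (q:ℝ) ^ ((1:ℝ)/2) :=
      le_trans hMq (Real.rpow_le_rpow_of_exponent_le hq1 (by linarith))
    have hqs : (q:ℝ) ^ ((1:ℝ)/2) ≤ (3:ℝ) ^ ((1:ℝ)/(4*ε)) := by
      have h1 : (q:ℝ) ^ ((1:ℝ)/2) = ((q:ℝ) ^ (2*ε)) ^ ((1:ℝ)/(4*ε)) := by
        rw [← Real.rpow_mul hq0.le]
        congr 1
        field_simp
        ring
      rw [h1]
      exact Real.rpow_le_rpow (Real.rpow_nonneg hq0.le _) hbig.le (by positivity)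
    have hM3 : M ≤ (3:ℝ) ^ ((1:ℝ)/(4*ε)) := le_trans hM12 hqs
    have htb := triv_bound p β₁ β₂ β₃ M q hM1
    have hsplit : (M:ℝ)^(3:ℕ) = M ^ ((3:ℝ)/2 - ε) * M ^ ((3:ℝ)/2 + ε) := by
      rw [← Real.rpow_add hM0, ← Real.rpow_natCast M 3]
      congr 1
      push_cast
      ring
    have hfac : M ^ ((3:ℝ)/2 - ε) ≤ (3:ℝ) ^ ((3:ℝ)/(8*ε)) := by
      calc M ^ ((3:ℝ)/2 - ε) ≤ M ^ ((3:ℝ)/2) :=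
          Real.rpow_le_rpow_of_exponent_le hM1 (by linarith)
        _ ≤ ((3:ℝ) ^ ((1:ℝ)/(4*ε))) ^ ((3:ℝ)/2) :=
          Real.rpow_le_rpow hM0.le hM3 (by norm_num)
        _ = (3:ℝ) ^ ((3:ℝ)/(8*ε)) := by
          rw [← Real.rpow_mul (by norm_num : (0:ℝ) ≤ 3)]
          congr 1
          field_simp
          ring
    calc (sigmaCount p β₁ β₂ β₃ M q : ℝ) ≤ 27 * M^(3:ℕ) := htb
      _ = 27 * (M ^ ((3:ℝ)/2 - ε) * M ^ ((3:ℝ)/2 + ε)) := by rw [hsplit]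
      _ ≤ 27 * ((3:ℝ) ^ ((3:ℝ)/(8*ε)) * M ^ ((3:ℝ)/2 + ε)) := by
          apply mul_le_mul_of_nonneg_left _ (by norm_num)
          exact mul_le_mul_of_nonneg_right hfac hYpos.le
      _ = C₂ * M ^ ((3:ℝ)/2 + ε) := by rw [hC₂def]; ring
      _ ≤ (C₁ + C₂) * M ^ ((3:ℝ)/2 + ε) := by nlinarith

end scratch
end
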